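/- arXiv:2212.02697 — 11 statements merged into one kernel-verified Lean document; each statement's English description precedes it below -/
import Mathlib

section
/- Let \mathfrak{D} be a graded monoid of minimal degree c (i.e., a monoid with a homomorphism deg: \mathfrak{D} → ℕ whose image is cℕ) which is a submonoid of a group \mathfrak{H}, and suppose that for all s ∈ cℕ the sets \mathfrak{D}^{(s)} = deg^{-1}(s) are finite of the same cardinality n. Write \mathfrak{D}^{(c)} = {φ_1, …, φ_n} and set σ_i := φ_1^{-1}φ_i ∈ \mathfrak{H}. Then the set \mathfrak{S} := {σ_1, …, σ_n} is a subgroup of \mathfrak{H}. -/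
/-- A graded monoid `D` of minimal degree `c`, realized as a multiplicatively closed
subset of a group `H` with a degree map that is a homomorphism on `D` and takes values
in `c·ℕ⁺`.  If all the graded pieces `D^{(s)}` (for `s ∈ cℕ`) are finite of the same
cardinality `n`, and `φ : Fin n → H` enumerates `D^{(c)}`, then with
`σ i := (φ 0)⁻¹ * φ i` the set `𝔖 := {σ 1, …, σ n}` is a subgroup of `H`. -/
theorem stmt0 {H : Type*} [Group H] (D : Set H)
    (hDmul : ∀ a ∈ D, ∀ b ∈ D, a * b ∈ D)
    (deg : H → ℕ) (c n : ℕ) (hc : 1 ≤ c) (hn : 0 < n)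
    (hdeg : ∀ a ∈ D, ∀ b ∈ D, deg (a * b) = deg a + deg b)
    (hgr : ∀ a ∈ D, ∃ k, 1 ≤ k ∧ deg a = c * k)
    (hfin : ∀ k, 1 ≤ k → {a | a ∈ D ∧ deg a = c * k}.Finite)
    (hcard : ∀ k, 1 ≤ k → {a | a ∈ D ∧ deg a = c * k}.ncard = n)
    (φ : Fin n → H) (hφinj : Function.Injective φ)
    (hφran : Set.range φ = {a | a ∈ D ∧ deg a = c * 1}) :
    ∃ S : Subgroup H, (S : Set H) = Set.range (fun i : Fin n => (φ ⟨0, hn⟩)⁻¹ * φ i) := by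
  classical
  set φ0 := φ ⟨0, hn⟩ with hφ0def
  set D1 : Set H := {a | a ∈ D ∧ deg a = c * 1} with hD1
  set D2 : Set H := {a | a ∈ D ∧ deg a = c * 2} with hD2
  have hφmem : ∀ i, φ i ∈ D1 := fun i => hφran ▸ Set.mem_range_self i
  have hφ0mem : φ0 ∈ D1 := hφmem _
  have hmul2 : ∀ a ∈ D1, ∀ b ∈ D1, a * b ∈ D2 := by
    intro a ha b hb
    refine ⟨hDmul a ha.1 b hb.1, ?_⟩
    rw [hdeg a ha.1 b hb.1, ha.2, hb.2]; ring
  have hD2fin : D2.Finite := hfin 2 (by norm_num)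
  have hcard12 : D2.ncard = D1.ncard := by
    rw [hcard 1 le_rfl, hcard 2 (by norm_num)]
  have hleft : (fun x => φ0 * x) '' D1 = D2 := by
    apply Set.eq_of_subset_of_ncard_le
    · rintro _ ⟨x, hx, rfl⟩; exact hmul2 φ0 hφ0mem x hx
    · rw [Set.ncard_image_of_injective _ (mul_right_injective φ0), hcard12]
    · exact hD2fin
  have hright : (fun x => x * φ0) '' D1 = D2 := by
    apply Set.eq_of_subset_of_ncard_le
    · rintro _ ⟨x, hx, rfl⟩; exact hmul2 x hx φ0 hφ0mem
    · rw [Set.ncard_image_of_injective _ (mul_left_injective φ0), hcard12]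
    · exact hD2fin
  set σ : Fin n → H := fun i => φ0⁻¹ * φ i with hσ
  set T : Set H := Set.range σ with hT
  have hone : (1 : H) ∈ T := ⟨⟨0, hn⟩, by simp [hσ, hφ0def]⟩
  have hmulT : ∀ a ∈ T, ∀ b ∈ T, a * b ∈ T := by
    rintro _ ⟨i, rfl⟩ _ ⟨j, rfl⟩
    have h1 : φ0 * φ i ∈ D2 := hmul2 φ0 hφ0mem (φ i) (hφmem i)
    rw [← hright] at h1
    obtain ⟨ψ, hψ1, hψ2⟩ := h1
    have h2 : ψ * φ j ∈ D2 := hmul2 ψ hψ1 (φ j) (hφmem j)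
    rw [← hleft] at h2
    obtain ⟨χ, hχ1, hχ2⟩ := h2
    have : χ ∈ Set.range φ := hφran ▸ hχ1
    obtain ⟨k, rfl⟩ := this
    refine ⟨k, ?_⟩
    simp only [hσ]
    have hψ2' : ψ * φ0 = φ0 * φ i := hψ2
    have hχ2' : φ0 * φ k = ψ * φ j := hχ2
    have hi : φ i = φ0⁻¹ * (ψ * φ0) := by rw [hψ2']; group
    have hk : φ k = φ0⁻¹ * (ψ * φ j) := by rw [← hχ2']; group
    rw [hi, hk]; group
  have hinvT : ∀ a ∈ T, a⁻¹ ∈ T := by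
    intro a ha
    have hTfin : T.Finite := Set.finite_range σ
    have himg : (fun x => a * x) '' T = T := by
      apply Set.eq_of_subset_of_ncard_le
      · rintro _ ⟨x, hx, rfl⟩; exact hmulT a ha x hx
      · rw [Set.ncard_image_of_injective _ (mul_right_injective a)]
      · exact hTfin
    have h1 : (1 : H) ∈ (fun x => a * x) '' T := by rw [himg]; exact hone
    obtain ⟨t, ht, ht1⟩ := h1
    have ht1' : a * t = 1 := ht1
    rwa [inv_eq_of_mul_eq_one_right ht1']
  exact ⟨{ carrier := T, one_mem' := hone,
           mul_mem' := fun ha hb => hmulT _ ha _ hb,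
           inv_mem' := fun ha => hinvT _ ha }, rfl⟩
end

section
/- Under the same hypotheses (graded monoid \mathfrak{D} of minimal degree c embedded in a group \mathfrak{H}, all \mathfrak{D}^{(s)} finite of cardinality n, σ_i := φ_1^{-1}φ_i, \mathfrak{S} := {σ_1,…,σ_n}), the subgroup \mathfrak{S} is normalized by φ_1, i.e., φ_1^{-1}\mathfrak{S}φ_1 = \mathfrak{S}; moreover for every s ∈ cℕ one has \mathfrak{D}^{(s)} = { φ_1^{s/c} σ_i : 1 ≤ i ≤ n }. -/
/-- Lemma 2.6 of the paper.  Let `D` be a graded monoid of minimal degree `c`,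
realized as a multiplicatively closed subset of a group `H`, all of whose graded
pieces `D^{(s)}` (`s ∈ cℕ`) are finite of the same cardinality `n`.  Enumerate
`D^{(c)} = {φ 0, …, φ (n-1)}` and set `σ i := (φ 0)⁻¹ * φ i`,
`𝔖 := {σ 0, …, σ (n-1)}`.  Then `𝔖` is normalized by `φ 0`, i.e.
`(φ 0)⁻¹ 𝔖 (φ 0) = 𝔖`, and for all `s = c*k ∈ cℕ` one has
`D^{(s)} = {(φ 0)^k * σ i | 1 ≤ i ≤ n}`. -/
theorem stmt1 {H : Type*} [Group H] (D : Set H)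
    (hDmul : ∀ a ∈ D, ∀ b ∈ D, a * b ∈ D)
    (deg : H → ℕ) (c n : ℕ) (hc : 1 ≤ c) (hn : 0 < n)
    (hdeg : ∀ a ∈ D, ∀ b ∈ D, deg (a * b) = deg a + deg b)
    (hgr : ∀ a ∈ D, ∃ k, 1 ≤ k ∧ deg a = c * k)
    (hfin : ∀ k, 1 ≤ k → {a | a ∈ D ∧ deg a = c * k}.Finite)
    (hcard : ∀ k, 1 ≤ k → {a | a ∈ D ∧ deg a = c * k}.ncard = n)
    (φ : Fin n → H) (hφinj : Function.Injective φ)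
    (hφran : Set.range φ = {a | a ∈ D ∧ deg a = c * 1}) :
    ((fun τ : H => (φ ⟨0, hn⟩)⁻¹ * τ * φ ⟨0, hn⟩) ''
        Set.range (fun i : Fin n => (φ ⟨0, hn⟩)⁻¹ * φ i)
      = Set.range (fun i : Fin n => (φ ⟨0, hn⟩)⁻¹ * φ i)) ∧
    (∀ k, 1 ≤ k →
      {a | a ∈ D ∧ deg a = c * k}
        = Set.range (fun i : Fin n => (φ ⟨0, hn⟩) ^ k * ((φ ⟨0, hn⟩)⁻¹ * φ i))) := by
  set φ0 := φ ⟨0, hn⟩ with hφ0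
  have hφ0mem : φ0 ∈ D ∧ deg φ0 = c * 1 := by
    have h : φ0 ∈ Set.range φ := ⟨_, rfl⟩
    rw [hφran] at h; exact h
  have part2 : ∀ k, 1 ≤ k → {a | a ∈ D ∧ deg a = c * k}
      = Set.range (fun i : Fin n => φ0 ^ k * (φ0⁻¹ * φ i)) := by
    intro k hk
    induction k with
    | zero => omega
    | succ k ih =>
      rcases Nat.lt_or_ge k 1 with h1 | h1
      · have hk0 : k = 0 := by omega
        subst hk0
        rw [← hφran]
        ext a
        simp [pow_one]
      · have ihk := ih h1
        have hsub : (fun a => φ0 * a) '' {a | a ∈ D ∧ deg a = c * k}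
            ⊆ {a | a ∈ D ∧ deg a = c * (k + 1)} := by
          rintro _ ⟨a, ⟨haD, hadeg⟩, rfl⟩
          refine ⟨hDmul _ hφ0mem.1 _ haD, ?_⟩
          rw [hdeg _ hφ0mem.1 _ haD, hφ0mem.2, hadeg]; ring
        have heq : (fun a => φ0 * a) '' {a | a ∈ D ∧ deg a = c * k}
            = {a | a ∈ D ∧ deg a = c * (k + 1)} := by
          refine Set.eq_of_subset_of_ncard_le hsub ?_ (hfin (k + 1) hk)
          rw [Set.ncard_image_of_injective _ (mul_right_injective φ0),
            hcard k h1, hcard (k + 1) hk]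
        rw [← heq, ihk]
        ext a
        simp only [Set.mem_image, Set.mem_range]
        constructor
        · rintro ⟨_, ⟨i, rfl⟩, rfl⟩
          exact ⟨i, by rw [pow_succ']; group⟩
        · rintro ⟨i, rfl⟩
          exact ⟨_, ⟨i, rfl⟩, by rw [pow_succ']; group⟩
  refine ⟨?_, part2⟩
  have hconj : ∀ i : Fin n, ∃ j : Fin n,
      φ0⁻¹ * (φ0⁻¹ * φ i) * φ0 = φ0⁻¹ * φ j := by
    intro i
    have hi : φ i ∈ D ∧ deg (φ i) = c * 1 := by
      have h : φ i ∈ Set.range φ := ⟨_, rfl⟩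
      rw [hφran] at h; exact h
    have hmem : φ i * φ0 ∈ {a | a ∈ D ∧ deg a = c * 2} := by
      refine ⟨hDmul _ hi.1 _ hφ0mem.1, ?_⟩
      rw [hdeg _ hi.1 _ hφ0mem.1, hi.2, hφ0mem.2]; ring
    rw [part2 2 (by norm_num)] at hmem
    obtain ⟨j, hj⟩ := hmem
    simp only at hj
    refine ⟨j, ?_⟩
    have h3 : φ i * φ0 = φ0 * φ j := by rw [← hj]; group
    have h2 : φ i = φ0 * φ j * φ0⁻¹ := by rw [← h3]; group
    rw [h2]; group
  have hS : (fun τ : H => φ0⁻¹ * τ * φ0) '' Set.range (fun i : Fin n => φ0⁻¹ * φ i)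
      ⊆ Set.range (fun i : Fin n => φ0⁻¹ * φ i) := by
    rintro _ ⟨_, ⟨i, rfl⟩, rfl⟩
    obtain ⟨j, hj⟩ := hconj i
    exact ⟨j, hj.symm⟩
  apply Set.eq_of_subset_of_ncard_le hS ?_ (Set.finite_range _)
  rw [Set.ncard_image_of_injective]
  intro a b hab
  exact mul_left_cancel (mul_right_cancel hab)
end

section
/- For a graded monoid \mathfrak{D} of minimal degree c, the following are equivalent: (1) \mathfrak{D} is cancellative and all fibers \mathfrak{D}^{(s)} (s ∈ cℕ) are finite of the same cardinality; (2) \mathfrak{D} is isomorphic as a graded monoid to a semidirect product cℕ ×_θ \mathfrak{S}, where \mathfrak{S} is a finite group and θ is a group automorphism of \mathfrak{S}, with multiplication (s₁,σ₁)(s₂,σ₂) = (s₁+s₂, θ^{s₂/c}(σ₁)σ₂). -/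
universe u

/-- Division lemma: in a cancellative graded semigroup with equal finite fibers,
one can divide on the left. -/
theorem stmt2_ldiv {D : Type u} [Semigroup D]
    (deg : D → ℕ) (c : ℕ)
    (hdeg : ∀ a b : D, deg (a * b) = deg a + deg b)
    (hgr : ∀ a : D, ∃ k, 1 ≤ k ∧ deg a = c * k)
    (hl : ∀ a b b' : D, a * b = a * b' → b = b')
    (n : ℕ)
    (hfib : ∀ k, 1 ≤ k → {a : D | deg a = c * k}.Finite ∧ {a : D | deg a = c * k}.ncard = n)
    (a b : D) (k : ℕ) (hk : 1 ≤ k) (hb : deg b = deg a + c * k) :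
    ∃ x, deg x = c * k ∧ a * x = b := by
  obtain ⟨m, hm, hma⟩ := hgr a
  have hA := hfib k hk
  have hB := hfib (m + k) (by omega)
  have himg : (fun x => a * x) '' {x : D | deg x = c * k} = {x : D | deg x = c * (m + k)} := by
    apply Set.eq_of_subset_of_ncard_le
    · rintro _ ⟨x, hx, rfl⟩
      simp only [Set.mem_setOf_eq] at hx ⊢
      rw [hdeg, hma, hx]; ring
    · rw [Set.ncard_image_of_injOn (fun x _ y _ h => hl a x y h), hA.2, hB.2]
    · exact hB.1
  have hbB : b ∈ {x : D | deg x = c * (m + k)} := by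
    simp only [Set.mem_setOf_eq]
    rw [hb, hma]; ring
  rw [← himg] at hbB
  obtain ⟨x, hx, hax⟩ := hbB
  exact ⟨x, hx, hax⟩

theorem stmt2_rdiv {D : Type u} [Semigroup D]
    (deg : D → ℕ) (c : ℕ)
    (hdeg : ∀ a b : D, deg (a * b) = deg a + deg b)
    (hgr : ∀ a : D, ∃ k, 1 ≤ k ∧ deg a = c * k)
    (hr : ∀ a a' b : D, a * b = a' * b → a = a')
    (n : ℕ)
    (hfib : ∀ k, 1 ≤ k → {a : D | deg a = c * k}.Finite ∧ {a : D | deg a = c * k}.ncard = n)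
    (a b : D) (k : ℕ) (hk : 1 ≤ k) (hb : deg b = c * k + deg a) :
    ∃ x, deg x = c * k ∧ x * a = b := by
  obtain ⟨m, hm, hma⟩ := hgr a
  have hA := hfib k hk
  have hB := hfib (k + m) (by omega)
  have himg : (fun x => x * a) '' {x : D | deg x = c * k} = {x : D | deg x = c * (k + m)} := by
    apply Set.eq_of_subset_of_ncard_le
    · rintro _ ⟨x, hx, rfl⟩
      simp only [Set.mem_setOf_eq] at hx ⊢
      rw [hdeg, hma, hx]; ring
    · rw [Set.ncard_image_of_injOn (fun x _ y _ h => hr x y a h), hA.2, hB.2]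
    · exact hB.1
  have hbB : b ∈ {x : D | deg x = c * (k + m)} := by
    simp only [Set.mem_setOf_eq]
    rw [hb, hma]; ring
  rw [← himg] at hbB
  obtain ⟨x, hx, hax⟩ := hbB
  exact ⟨x, hx, hax⟩

theorem stmt2_aux {D : Type u} [Semigroup D]
    (deg : D → ℕ) (c : ℕ) (hc : 1 ≤ c)
    (hdeg : ∀ a b : D, deg (a * b) = deg a + deg b)
    (hgr : ∀ a : D, ∃ k, 1 ≤ k ∧ deg a = c * k)
    (hsurj : ∀ k, 1 ≤ k → ∃ a : D, deg a = c * k)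
    (hl : ∀ a b b' : D, a * b = a * b' → b = b')
    (hr : ∀ a a' b : D, a * b = a' * b → a = a')
    (n : ℕ)
    (hfib : ∀ k, 1 ≤ k → {a : D | deg a = c * k}.Finite ∧ {a : D | deg a = c * k}.ncard = n) :
    ∃ (S : Type u) (_ : Group S) (_ : Fintype S) (θ : MulAut S)
        (e : D ≃ {q : ℕ × S // 1 ≤ q.1}),
      (∀ x : D, deg x = c * (e x : ℕ × S).1) ∧
      (∀ x y : D, ((e (x * y) : ℕ × S)
          = ((e x : ℕ × S).1 + (e y : ℕ × S).1,
             (θ ^ (e y : ℕ × S).1) (e x : ℕ × S).2 * (e y : ℕ × S).2))) := by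

  have ldiv := stmt2_ldiv deg c hdeg hgr hl n hfib
  have rdiv := stmt2_rdiv deg c hdeg hgr hr n hfib
  obtain ⟨u, hu⟩ := hsurj 1 le_rfl
  have hu' : deg u = c := by simpa using hu
  -- the twist map Θ and its inverse Θ'
  have exΘ : ∀ a : D, ∃ x, deg x = deg a ∧ u * x = a * u := by
    intro a
    obtain ⟨k, hk, hka⟩ := hgr a
    obtain ⟨x, hx, hux⟩ := ldiv u (a * u) k hk (by rw [hdeg, hka, hu']; ring)
    exact ⟨x, by rw [hx, hka], hux⟩
  choose Θ hΘdeg hΘ using exΘ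
  have exΘ' : ∀ a : D, ∃ x, deg x = deg a ∧ x * u = u * a := by
    intro a
    obtain ⟨k, hk, hka⟩ := hgr a
    obtain ⟨x, hx, hux⟩ := rdiv u (u * a) k hk (by rw [hdeg, hka, hu']; ring)
    exact ⟨x, by rw [hx, hka], hux⟩
  choose Θ' hΘ'deg hΘ' using exΘ'
  have ΘΘ' : ∀ a, Θ (Θ' a) = a := fun a => hl u _ _ (by rw [hΘ, hΘ'])
  have Θ'Θ : ∀ a, Θ' (Θ a) = a := fun a => hr _ _ u (by rw [hΘ', hΘ])
  have Θmul : ∀ a b, Θ (a * b) = Θ a * Θ b := by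
    intro a b
    apply hl u
    rw [hΘ]
    calc a * b * u = a * (b * u) := mul_assoc _ _ _
    _ = a * (u * Θ b) := by rw [hΘ]
    _ = (a * u) * Θ b := (mul_assoc _ _ _).symm
    _ = (u * Θ a) * Θ b := by rw [hΘ]
    _ = u * (Θ a * Θ b) := mul_assoc _ _ _
  have Θu : Θ u = u := hl u _ _ (by rw [hΘ])
  have Θ'u : Θ' u = u := hr _ _ u (by rw [hΘ'])
  have Θ'mul : ∀ a b, Θ' (a * b) = Θ' a * Θ' b := by
    intro a b
    calc Θ' (a * b) = Θ' (Θ (Θ' a) * Θ (Θ' b)) := by rw [ΘΘ', ΘΘ']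
    _ = Θ' (Θ (Θ' a * Θ' b)) := by rw [Θmul]
    _ = Θ' a * Θ' b := Θ'Θ _
  have iterpred : ∀ (m : ℕ), 1 ≤ m → ∀ z : D, Θ^[m] (Θ' z) = Θ^[m-1] z := by
    intro m hm z
    obtain ⟨l, rfl⟩ : ∃ l, m = l + 1 := ⟨m - 1, by omega⟩
    rw [Function.iterate_succ_apply, ΘΘ']
    simp
  have predΘ' : ∀ (m : ℕ), 1 ≤ m → ∀ z : D, Θ' (Θ^[m] z) = Θ^[m-1] z := by
    intro m hm z
    obtain ⟨l, rfl⟩ : ∃ l, m = l + 1 := ⟨m - 1, by omega⟩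
    rw [Function.iterate_succ_apply' Θ l z, Θ'Θ]
    simp
  -- powers of u : U k = u^(k+1)
  set U : ℕ → D := fun k => Nat.rec u (fun _ x => u * x) k with hU
  have Usucc : ∀ k, U (k+1) = u * U k := fun k => rfl
  have Udeg : ∀ k, deg (U k) = c * (k + 1) := by
    intro k
    induction k with
    | zero => show deg u = c * (0 + 1); simpa using hu'
    | succ k ih => rw [Usucc, hdeg, hu', ih]; ring
  have Usucc' : ∀ k, U (k+1) = U k * u := by
    intro k
    induction k with
    | zero => rfl
    | succ k ih =>
      calc U (k+1+1) = u * U (k+1) := Usucc (k+1)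
      _ = u * (U k * u) := by rw [ih]
      _ = (u * U k) * u := (mul_assoc _ _ _).symm
      _ = U (k+1) * u := by rw [← Usucc]
  have Uadd : ∀ k l, U (k + l + 1) = U k * U l := by
    intro k l
    induction k with
    | zero =>
      have h0 : 0 + l + 1 = l + 1 := by omega
      rw [h0]
      exact Usucc l
    | succ k ih =>
      have h7 : k + 1 + l + 1 = (k + l + 1) + 1 := by omega
      calc U (k + 1 + l + 1) = U ((k + l + 1) + 1) := by rw [h7]
      _ = u * U (k + l + 1) := Usucc (k + l + 1)
      _ = u * (U k * U l) := by rw [ih]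
      _ = (u * U k) * U l := (mul_assoc _ _ _).symm
      _ = U (k + 1) * U l := by rw [← Usucc]
  have comm : ∀ (l : ℕ) (a : D), a * U l = U l * (Θ^[l+1] a) := by
    intro l
    induction l with
    | zero => intro a; show a * u = u * Θ^[0+1] a; simpa using (hΘ a).symm
    | succ l ih =>
      intro a
      calc a * U (l+1) = a * (U l * u) := by rw [Usucc']
      _ = (a * U l) * u := (mul_assoc _ _ _).symm
      _ = (U l * Θ^[l+1] a) * u := by rw [ih]
      _ = U l * (Θ^[l+1] a * u) := mul_assoc _ _ _
      _ = U l * (u * Θ (Θ^[l+1] a)) := by rw [hΘ]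
      _ = (U l * u) * Θ (Θ^[l+1] a) := (mul_assoc _ _ _).symm
      _ = U (l+1) * Θ^[l+1+1] a := by
            rw [← Usucc', Function.iterate_succ_apply' Θ (l+1) a]
  -- coordinates
  choose K hK1 hK2 using hgr
  have exσ : ∀ a : D, ∃ x, deg x = c ∧ U (K a - 1) * x = u * a := by
    intro a
    have h1 : deg (u * a) = deg (U (K a - 1)) + c * 1 := by
      rw [hdeg, hu', hK2, Udeg, Nat.sub_add_cancel (hK1 a)]; ring
    obtain ⟨x, hx, hux⟩ := ldiv (U (K a - 1)) (u * a) 1 le_rfl h1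
    exact ⟨x, by simpa using hx, hux⟩
  choose σf hσdeg hσ using exσ
  -- the group S
  have hfin1 : {x : D | deg x = c}.Finite := by
    have := (hfib 1 le_rfl).1
    simpa using this
  letI : Fintype {x : D // deg x = c} := hfin1.fintype
  have exmul : ∀ σ τ : {x : D // deg x = c}, ∃ x, deg x = c ∧ u * x = Θ' σ.1 * τ.1 := by
    intro σ τ
    have h1 : deg (Θ' σ.1 * τ.1) = deg u + c * 1 := by
      rw [hdeg, hΘ'deg, σ.2, τ.2, hu']; ring
    obtain ⟨x, hx, hux⟩ := ldiv u _ 1 le_rfl h1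
    exact ⟨x, by simpa using hx, hux⟩
  choose mS hmS1 hmS2 using exmul
  have exinv : ∀ σ : {x : D // deg x = c}, ∃ x, deg x = c ∧ Θ' x * σ.1 = u * u := by
    intro σ
    have h1 : deg (u * u) = c * 1 + deg σ.1 := by rw [hdeg, hu', σ.2]; ring
    obtain ⟨y, hy, hyσ⟩ := rdiv σ.1 (u * u) 1 le_rfl h1
    refine ⟨Θ y, by rw [hΘdeg]; simpa using hy, ?_⟩
    rw [Θ'Θ, hyσ]
  choose iS hiS1 hiS2 using exinv
  letI : Mul {x : D // deg x = c} := ⟨fun σ τ => ⟨mS σ τ, hmS1 σ τ⟩⟩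
  letI : One {x : D // deg x = c} := ⟨⟨u, hu'⟩⟩
  letI : Inv {x : D // deg x = c} := ⟨fun σ => ⟨iS σ, hiS1 σ⟩⟩
  have mul_def : ∀ σ τ : {x : D // deg x = c}, u * (σ * τ).1 = Θ' σ.1 * τ.1 := fun σ τ => hmS2 σ τ
  have uΘ' : ∀ a : D, u * Θ' a = Θ' (Θ' a) * u := fun a => (hΘ' (Θ' a)).symm
  letI : Group {x : D // deg x = c} := by
    apply Group.ofLeftAxioms
    · intro σ τ ρ
      apply Subtype.ext
      apply hl u
      apply hl u
      calc u * (u * (σ * τ * ρ).1) = u * (Θ' (σ * τ).1 * ρ.1) := by rw [mul_def]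
      _ = (u * Θ' (σ * τ).1) * ρ.1 := (mul_assoc _ _ _).symm
      _ = (Θ' (Θ' σ.1) * Θ' τ.1) * ρ.1 := by
            have step : u * Θ' ((σ * τ).1) = Θ' (Θ' σ.1) * Θ' τ.1 := by
              calc u * Θ' ((σ * τ).1) = Θ' u * Θ' ((σ * τ).1) := by rw [Θ'u]
              _ = Θ' (u * (σ * τ).1) := (Θ'mul _ _).symm
              _ = Θ' (Θ' σ.1 * τ.1) := by rw [mul_def]
              _ = Θ' (Θ' σ.1) * Θ' τ.1 := Θ'mul _ _
            rw [step]
      _ = Θ' (Θ' σ.1) * (Θ' τ.1 * ρ.1) := mul_assoc _ _ _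
      _ = Θ' (Θ' σ.1) * (u * (τ * ρ).1) := by rw [mul_def]
      _ = (Θ' (Θ' σ.1) * u) * (τ * ρ).1 := (mul_assoc _ _ _).symm
      _ = (u * Θ' σ.1) * (τ * ρ).1 := by rw [← uΘ']
      _ = u * (Θ' σ.1 * (τ * ρ).1) := mul_assoc _ _ _
      _ = u * (u * (σ * (τ * ρ)).1) := by rw [mul_def]
    · intro σ
      apply Subtype.ext
      apply hl u
      calc u * ((1 : {x : D // deg x = c}) * σ).1 = Θ' u * σ.1 := mul_def _ _
      _ = u * σ.1 := by rw [Θ'u]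
    · intro σ
      apply Subtype.ext
      apply hl u
      calc u * (σ⁻¹ * σ).1 = Θ' (iS σ) * σ.1 := mul_def _ _
      _ = u * u := hiS2 σ
      _ = u * (1 : {x : D // deg x = c}).1 := rfl
  -- the automorphism
  have θmap_mul : ∀ σ τ : {x : D // deg x = c},
      Θ ((σ * τ).1) = ((⟨Θ σ.1, by rw [hΘdeg]; exact σ.2⟩ : {x : D // deg x = c}) *
        ⟨Θ τ.1, by rw [hΘdeg]; exact τ.2⟩).1 := by
    intro σ τ
    apply hl u
    rw [mul_def]
    show u * Θ ((σ * τ).1) = Θ' (Θ σ.1) * Θ τ.1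
    rw [Θ'Θ]
    calc u * Θ ((σ * τ).1) = Θ u * Θ ((σ * τ).1) := by rw [Θu]
    _ = Θ (u * (σ * τ).1) := (Θmul _ _).symm
    _ = Θ (Θ' σ.1 * τ.1) := by rw [mul_def]
    _ = Θ (Θ' σ.1) * Θ τ.1 := Θmul _ _
    _ = σ.1 * Θ τ.1 := by rw [ΘΘ']
  set θ : MulAut {x : D // deg x = c} :=
    { toFun := fun σ => ⟨Θ σ.1, by rw [hΘdeg]; exact σ.2⟩
      invFun := fun σ => ⟨Θ' σ.1, by rw [hΘ'deg]; exact σ.2⟩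
      left_inv := fun σ => Subtype.ext (Θ'Θ σ.1)
      right_inv := fun σ => Subtype.ext (ΘΘ' σ.1)
      map_mul' := fun σ τ => Subtype.ext (θmap_mul σ τ) } with hθ
  have θpow : ∀ (l : ℕ) (σ : {x : D // deg x = c}), ((θ ^ l) σ).1 = Θ^[l] σ.1 := by
    intro l
    induction l with
    | zero => intro σ; simp
    | succ l ih =>
      intro σ
      rw [pow_succ, Function.iterate_succ_apply]
      have h2 : (θ ^ l * θ) σ = (θ ^ l) (θ σ) := rfl
      rw [h2, ih]
      rfl
  -- the equivalence e
  have exg : ∀ q : {q : ℕ × {x : D // deg x = c} // 1 ≤ q.1}, ∃ a : D,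
      deg a = c * q.1.1 ∧ u * a = U (q.1.1 - 1) * q.1.2.1 := by
    rintro ⟨⟨k, s⟩, hk⟩
    have h1 : deg (U (k - 1) * s.1) = deg u + c * k := by
      rw [hdeg, hu', Udeg, Nat.sub_add_cancel hk, s.2]; ring
    obtain ⟨a, ha, hua⟩ := ldiv u _ k hk h1
    exact ⟨a, ha, hua⟩
  choose g hg1 hg2 using exg
  have hKeq : ∀ (a : D) (k : ℕ), deg a = c * k → K a = k := by
    intro a k hk
    have h2 : c * K a = c * k := by rw [← hK2, hk]
    exact Nat.eq_of_mul_eq_mul_left hc h2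
  set e : D ≃ {q : ℕ × {x : D // deg x = c} // 1 ≤ q.1} :=
    { toFun := fun a => ⟨(K a, ⟨σf a, hσdeg a⟩), hK1 a⟩
      invFun := g
      left_inv := by
        intro a
        apply hl u
        show u * g _ = u * a
        rw [hg2]
        exact hσ a
      right_inv := by
        rintro ⟨⟨k, s⟩, hk⟩
        have hKg : K (g ⟨(k, s), hk⟩) = k := hKeq _ _ (hg1 _)
        have hσg : σf (g ⟨(k, s), hk⟩) = s.1 := by
          apply hl (U (k - 1))
          have h3 := hσ (g ⟨(k, s), hk⟩)
          rw [hKg] at h3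
          rw [h3]
          exact hg2 _
        apply Subtype.ext
        apply Prod.ext
        · exact hKg
        · exact Subtype.ext hσg } with he
  refine ⟨{x : D // deg x = c}, inferInstance, inferInstance, θ, e, fun x => hK2 x, ?_⟩
  intro x y
  have hKxy : K (x * y) = K x + K y := by
    apply hKeq
    rw [hdeg, hK2 x, hK2 y, mul_add]
  -- key identity : u * σf (x*y) = Θ^[K y - 1] (σf x) * σf y
  have key : u * σf (x * y) = Θ^[K y - 1] (σf x) * σf y := by
    apply hl (U (K x + K y - 1))
    have hUsplit : U (K x + K y - 1) = U (K x - 1) * U (K y - 1) := by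
      have hKx := hK1 x; have hKy := hK1 y
      have h4 : K x + K y - 1 = (K x - 1) + (K y - 1) + 1 := by omega
      rw [h4, Uadd]
    have hcomm : Θ' (σf x) * U (K y - 1) = U (K y - 1) * Θ^[K y - 1] (σf x) := by
      rw [comm (K y - 1) (Θ' (σf x))]
      congr 1
      have h5 : K y - 1 + 1 = K y := Nat.sub_add_cancel (hK1 y)
      rw [h5]
      exact iterpred (K y) (hK1 y) (σf x)
    calc U (K x + K y - 1) * (u * σf (x * y))
        = (U (K x + K y - 1) * u) * σf (x * y) := (mul_assoc _ _ _).symm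
      _ = (u * U (K x + K y - 1)) * σf (x * y) := by
            rw [← Usucc, ← Usucc']
      _ = u * (U (K x + K y - 1) * σf (x * y)) := mul_assoc _ _ _
      _ = u * (u * (x * y)) := by
            have h6 := hσ (x * y); rw [hKxy] at h6; rw [h6]
      _ = u * ((u * x) * y) := by rw [mul_assoc]
      _ = u * ((U (K x - 1) * σf x) * y) := by rw [hσ x]
      _ = (u * U (K x - 1)) * (σf x * y) := by simp only [mul_assoc]
      _ = (U (K x - 1) * u) * (σf x * y) := by rw [← Usucc, ← Usucc']
      _ = U (K x - 1) * ((u * σf x) * y) := by simp only [mul_assoc]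
      _ = U (K x - 1) * ((Θ' (σf x) * u) * y) := by rw [hΘ']
      _ = U (K x - 1) * (Θ' (σf x) * (u * y)) := by simp only [mul_assoc]
      _ = U (K x - 1) * (Θ' (σf x) * (U (K y - 1) * σf y)) := by rw [hσ y]
      _ = U (K x - 1) * ((Θ' (σf x) * U (K y - 1)) * σf y) := by simp only [mul_assoc]
      _ = U (K x - 1) * ((U (K y - 1) * Θ^[K y - 1] (σf x)) * σf y) := by rw [hcomm]
      _ = (U (K x - 1) * U (K y - 1)) * (Θ^[K y - 1] (σf x) * σf y) := by
            simp only [mul_assoc]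
      _ = U (K x + K y - 1) * (Θ^[K y - 1] (σf x) * σf y) := by rw [hUsplit]
  apply Prod.ext
  · exact hKxy
  · show (⟨σf (x * y), hσdeg _⟩ : {x : D // deg x = c}) = _
    apply Subtype.ext
    apply hl u
    show u * σf (x * y) = u * ((θ ^ K y) ⟨σf x, hσdeg x⟩ * ⟨σf y, hσdeg y⟩).1
    rw [key, mul_def]
    congr 1
    rw [θpow]
    show Θ^[K y - 1] (σf x) = Θ' (Θ^[K y] (σf x))
    rw [predΘ' (K y) (hK1 y) (σf x)]

/-- An opaque copy of `Stmt2Carrier m`, used as carrier so that the ambient arithmetic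
instances on `Fin` do not interfere with a transported group structure. -/
def Stmt2Carrier (m : ℕ) : Type := Fin m

instance (m : ℕ) : Fintype (Stmt2Carrier m) := inferInstanceAs (Fintype (Fin m))



/-- Proposition 2.3 of the paper (equivalence of conditions (1) and (2)).
Let `D` be a graded monoid of minimal degree `c` (a semigroup with a degree
homomorphism `deg : D → ℕ` with image `cℕ`).  Then the following are equivalent:

1. `D` is cancellative and all its graded pieces `D^{(s)}` (`s ∈ cℕ`) are finite of
   the same cardinality;
2. `D` is isomorphic, as a graded monoid, to a semidirect product `cℕ ×_θ 𝔖` of `cℕ`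
   with a finite group `𝔖` twisted by a group automorphism `θ` of `𝔖`, with
   multiplication `(s₁,σ₁)(s₂,σ₂) = (s₁+s₂, θ^{s₂/c}(σ₁)σ₂)`
   (here the `ℕ`-component records `s/c`). -/
theorem stmt2 {D : Type*} [Semigroup D]
    (deg : D → ℕ) (c : ℕ) (hc : 1 ≤ c)
    (hdeg : ∀ a b : D, deg (a * b) = deg a + deg b)
    (hgr : ∀ a : D, ∃ k, 1 ≤ k ∧ deg a = c * k)
    (hsurj : ∀ k, 1 ≤ k → ∃ a : D, deg a = c * k) :
    ((∀ a b b' : D, a * b = a * b' → b = b') ∧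
     (∀ a a' b : D, a * b = a' * b → a = a') ∧
     ∃ n, ∀ k, 1 ≤ k →
       {a : D | deg a = c * k}.Finite ∧ {a : D | deg a = c * k}.ncard = n)
    ↔
    (∃ (S : Type) (_ : Group S) (_ : Fintype S) (θ : MulAut S)
        (e : D ≃ {q : ℕ × S // 1 ≤ q.1}),
      (∀ x : D, deg x = c * (e x : ℕ × S).1) ∧
      (∀ x y : D, ((e (x * y) : ℕ × S)
          = ((e x : ℕ × S).1 + (e y : ℕ × S).1,
             (θ ^ (e y : ℕ × S).1) (e x : ℕ × S).2 * (e y : ℕ × S).2)))) := by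
  constructor
  · rintro ⟨hl, hr, n, hfib⟩
    obtain ⟨S₁, g₁, f₁, θ₁, e₁, P1, P2⟩ :=
      stmt2_aux deg c hc hdeg hgr hsurj hl hr n hfib
    letI := g₁; letI := f₁
    set m := Fintype.card S₁ with hm
    let φ : Stmt2Carrier m ≃ S₁ := by exact (Fintype.equivFin S₁).symm
    letI : Mul (Stmt2Carrier m) := ⟨fun x y => φ.symm (φ x * φ y)⟩
    letI : One (Stmt2Carrier m) := ⟨φ.symm 1⟩
    letI : Inv (Stmt2Carrier m) := ⟨fun x => φ.symm (φ x)⁻¹⟩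
    have hmulFin : ∀ x y : Stmt2Carrier m, φ (x * y) = φ x * φ y := fun x y => by exact φ.apply_symm_apply _
    have honeFin : φ (1 : Stmt2Carrier m) = 1 := by exact φ.apply_symm_apply _
    have hinvFin : ∀ x : Stmt2Carrier m, φ (x⁻¹) = (φ x)⁻¹ := fun x => by exact φ.apply_symm_apply _
    letI : Group (Stmt2Carrier m) := Group.ofLeftAxioms
      (fun x y z => φ.injective
        (by rw [hmulFin, hmulFin, hmulFin, hmulFin, mul_assoc]))
      (fun x => φ.injective (by rw [hmulFin, honeFin, one_mul]))
      (fun x => φ.injective (by rw [hmulFin, hinvFin, inv_mul_cancel, honeFin]))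
    let ψ : Stmt2Carrier m ≃* S₁ :=
      { φ with map_mul' := fun x y => hmulFin x y }
    let θ : MulAut (Stmt2Carrier m) := (ψ.trans θ₁).trans ψ.symm
    have θpow : ∀ (l : ℕ) (x : Stmt2Carrier m), (θ ^ l) x = ψ.symm ((θ₁ ^ l) (ψ x)) := by
      intro l
      induction l with
      | zero => intro x; simp
      | succ l ih =>
        intro x
        rw [pow_succ, pow_succ]
        have h1 : (θ ^ l * θ) x = (θ ^ l) (θ x) := rfl
        have h2 : ∀ s, (θ₁ ^ l * θ₁) s = (θ₁ ^ l) (θ₁ s) := fun s => rfl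
        rw [h1, h2, ih]
        have h3 : θ x = ψ.symm (θ₁ (ψ x)) := rfl
        rw [h3]
        exact congrArg ψ.symm (congrArg (θ₁ ^ l) (ψ.apply_symm_apply _))
    let e : D ≃ {q : ℕ × Stmt2Carrier m // 1 ≤ q.1} :=
      e₁.trans (Equiv.subtypeEquiv
        (Equiv.prodCongr (Equiv.refl ℕ) ψ.symm.toEquiv)
        (fun q => Iff.rfl))
    have e1eq : ∀ x : D, (e x : ℕ × Stmt2Carrier m).1 = (e₁ x : ℕ × S₁).1 := fun x => rfl
    have e2eq : ∀ x : D, (e x : ℕ × Stmt2Carrier m).2 = ψ.symm (e₁ x : ℕ × S₁).2 := fun x => rfl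
    refine ⟨Stmt2Carrier m, inferInstance, inferInstance, θ, e, ?_, ?_⟩
    · intro x; rw [e1eq]; exact P1 x
    · intro x y
      apply Prod.ext
      · rw [e1eq, e1eq, e1eq, P2 x y]
      · rw [e2eq, e2eq, e2eq, P2 x y]
        show ψ.symm ((θ₁ ^ (e₁ y : ℕ × S₁).1) (e₁ x : ℕ × S₁).2 * (e₁ y : ℕ × S₁).2) = _
        rw [map_mul, θpow, MulEquiv.apply_symm_apply]
        simp only [e1eq]
  · rintro ⟨S, gS, fS, θ, e, P1, P2⟩
    have hcpos : 0 < c := hc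
    have einj := e.injective
    refine ⟨?_, ?_, Fintype.card S, ?_⟩
    · intro a b b' h
      have h2 := P2 a b
      have h3 := P2 a b'
      rw [h] at h2
      rw [h2] at h3
      have hfst : (e b : ℕ × S).1 = (e b' : ℕ × S).1 :=
        Nat.add_left_cancel (congrArg Prod.fst h3)
      have hsnd : (e b : ℕ × S).2 = (e b' : ℕ × S).2 := by
        have h4 := congrArg Prod.snd h3
        simp only at h4
        rw [hfst] at h4
        exact mul_left_cancel h4
      apply einj
      apply Subtype.ext
      exact Prod.ext hfst hsnd
    · intro a a' b h
      have h2 := P2 a b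
      have h3 := P2 a' b
      rw [h] at h2
      rw [h2] at h3
      have hfst : (e a : ℕ × S).1 = (e a' : ℕ × S).1 :=
        Nat.add_right_cancel (congrArg Prod.fst h3)
      have hsnd : (e a : ℕ × S).2 = (e a' : ℕ × S).2 := by
        have h4 := congrArg Prod.snd h3
        simp only at h4
        have h5 := mul_right_cancel h4
        exact (θ ^ (e b : ℕ × S).1).injective h5
      apply einj
      apply Subtype.ext
      exact Prod.ext hfst hsnd
    · intro k hk
      let E : {a : D // deg a = c * k} ≃ S :=
        { toFun := fun a => (e a.1 : ℕ × S).2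
          invFun := fun s => ⟨e.symm ⟨(k, s), hk⟩, by
            rw [P1 (e.symm ⟨(k, s), hk⟩), e.apply_symm_apply]⟩
          left_inv := by
            rintro ⟨a, ha⟩
            have hk1 : (e a : ℕ × S).1 = k := by
              have := P1 a
              rw [ha] at this
              exact (Nat.eq_of_mul_eq_mul_left hcpos this.symm)
            apply Subtype.ext
            show e.symm ⟨(k, (e a : ℕ × S).2), hk⟩ = a
            have : (⟨(k, (e a : ℕ × S).2), hk⟩ : {q : ℕ × S // 1 ≤ q.1}) = e a := by
              apply Subtype.ext
              exact Prod.ext hk1.symm rfl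
            rw [this, e.symm_apply_apply]
          right_inv := fun s => by
            show (e (e.symm ⟨(k, s), hk⟩) : ℕ × S).2 = s
            rw [e.apply_symm_apply] }
      have hfinite : Finite {a : D | deg a = c * k} := Finite.of_equiv S E.symm
      constructor
      · exact Set.finite_coe_iff.mp hfinite
      · rw [← Nat.card_coe_set_eq]
        exact (Nat.card_congr E).trans Nat.card_eq_fintype_card
end

section
/- Let \mathfrak{D} ≅ cℕ ×_θ \mathfrak{S} be a Weil monoid of minimal degree c represented by the pair (\mathfrak{S}, θ). Then the following are equivalent: (1) \mathfrak{D}^{(c)} is abelian (its elements pairwise commute); (2) the monoid \mathfrak{D} is abelian; (3) \mathfrak{S} is an abelian group and θ is the identity automorphism. -/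
/-- The multiplication of the semidirect product monoid `cℕ ×_θ 𝔖`; the first
component records the "reduced degree" `s/c`, so elements of degree `s = c*k`
have first component `k`, and `(s₁,σ₁)(s₂,σ₂) = (s₁+s₂, θ^{s₂/c}(σ₁)σ₂)`. -/
def sdMul {S : Type*} [Group S] (θ : MulAut S) (x y : ℕ × S) : ℕ × S :=
  (x.1 + y.1, (θ ^ y.1) x.2 * y.2)

lemma key {S : Type*} [Group S] (θ : MulAut S)
    (h : ∀ σ τ : S, sdMul θ (1, σ) (1, τ) = sdMul θ (1, τ) (1, σ)) :
    (∀ σ τ : S, σ * τ = τ * σ) ∧ θ = 1 := by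
  have h' : ∀ σ τ : S, θ σ * τ = θ τ * σ := by
    intro σ τ
    have := h σ τ
    simpa [sdMul, Prod.ext_iff] using this
  have hθ : θ = 1 := by
    ext σ
    have := h' σ 1
    simpa using this
  subst hθ
  refine ⟨fun σ τ => ?_, rfl⟩
  simpa using h' σ τ

/-- Corollary 2.5 of the paper.  Let `𝔇 ≅ cℕ ×_θ 𝔖` be a Weil monoid of minimal
degree `c` represented by the pair `(𝔖, θ)` (with `𝔖` a finite group and
`θ ∈ Aut(𝔖)`).  Then the following are equivalent:
(1) `𝔇^{(c)}` is abelian (its elements, i.e. those with first component `1`,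
pairwise commute); (2) the monoid `𝔇` is abelian (all elements, i.e. those with
first component `≥ 1`, pairwise commute); (3) `𝔖` is an abelian group and `θ` is
the identity automorphism. -/
theorem stmt3 {S : Type*} [Group S] [Finite S] (θ : MulAut S) (c : ℕ) (hc : 1 ≤ c) :
    ((∀ σ τ : S, sdMul θ (1, σ) (1, τ) = sdMul θ (1, τ) (1, σ)) ↔
      ((∀ σ τ : S, σ * τ = τ * σ) ∧ θ = 1)) ∧
    ((∀ x y : ℕ × S, 1 ≤ x.1 → 1 ≤ y.1 → sdMul θ x y = sdMul θ y x) ↔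
      ((∀ σ τ : S, σ * τ = τ * σ) ∧ θ = 1)) := by
  constructor
  · constructor
    · exact key θ
    · rintro ⟨hab, rfl⟩
      intro σ τ
      simp [sdMul, hab σ τ]
  · constructor
    · intro h
      exact key θ (fun σ τ => h (1, σ) (1, τ) le_rfl le_rfl)
    · rintro ⟨hab, rfl⟩
      intro x y _ _
      simp [sdMul, Prod.ext_iff, Nat.add_comm, hab x.2 y.2]
end

section
/- Let \mathfrak{D} be a cancellative graded monoid of minimal degree c with all graded pieces \mathfrak{D}^{(s)} finite of the same cardinality. Then \mathfrak{D} satisfies the right Ore condition: for all φ, φ' ∈ \mathfrak{D} we have \mathfrak{D}φ ∩ \mathfrak{D}φ' ≠ ∅. -/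
/-- Let `D` be a cancellative graded monoid of minimal degree `c` (a semigroup with
degree homomorphism `deg : D → ℕ` of image `cℕ`) all of whose graded pieces
`D^{(s)}` (`s ∈ cℕ`) are finite of the same cardinality.  Then `D` satisfies the
right Ore condition: for all `φ, φ' ∈ D` one has `Dφ ∩ Dφ' ≠ ∅`. -/
theorem stmt6 {D : Type*} [Semigroup D]
    (hlc : ∀ a b b' : D, a * b = a * b' → b = b')
    (hrc : ∀ a a' b : D, a * b = a' * b → a = a')
    (deg : D → ℕ) (c n : ℕ) (hc : 1 ≤ c)
    (hdeg : ∀ a b : D, deg (a * b) = deg a + deg b)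
    (hgr : ∀ a : D, ∃ k, 1 ≤ k ∧ deg a = c * k)
    (hsurj : ∀ k, 1 ≤ k → ∃ a : D, deg a = c * k)
    (hfin : ∀ k, 1 ≤ k → {a : D | deg a = c * k}.Finite)
    (hcard : ∀ k, 1 ≤ k → {a : D | deg a = c * k}.ncard = n) :
    ∀ φ φ' : D, ∃ ψ ψ' : D, ψ * φ = ψ' * φ' := by
  intro φ φ'
  obtain ⟨kφ, hkφ, hdφ⟩ := hgr φ
  obtain ⟨kφ', hkφ', hdφ'⟩ := hgr φ'
  obtain ⟨a, ha⟩ := hsurj 1 le_rfl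
  -- θ := a * φ * φ' has degree c*(1 + kφ' + kφ)
  set θ := a * φ * φ' with hθ
  have hdθ : deg θ = c * (1 + kφ' + kφ) := by
    simp [hθ, hdeg, ha, hdφ, hdφ']; ring
  -- right multiplication by φ maps {deg = c*(1+kφ')} onto {deg = c*(1+kφ'+kφ)}
  set S : Set D := {x | deg x = c * (1 + kφ')} with hS
  set T : Set D := {x | deg x = c * (1 + kφ' + kφ)} with hT
  have himg : (fun x => x * φ) '' S ⊆ T := by
    rintro _ ⟨x, hx, rfl⟩
    have hx' : deg x = c * (1 + kφ') := hx
    simp only [hT, Set.mem_setOf_eq, hdeg, hx', hdφ]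
    ring
  have hinj : Set.InjOn (fun x => x * φ) S := fun x _ y _ h => hrc x y φ h
  have h1 : 1 ≤ 1 + kφ' := by omega
  have h2 : 1 ≤ 1 + kφ' + kφ := by omega
  have hfinS := hfin _ h1
  have hfinT := hfin _ h2
  have hcardimg : ((fun x => x * φ) '' S).ncard = T.ncard := by
    rw [Set.ncard_image_of_injOn hinj, hcard _ h1, hcard _ h2]
  have heq : (fun x => x * φ) '' S = T :=
    Set.eq_of_subset_of_ncard_le himg (le_of_eq hcardimg.symm) hfinT
  have hθT : θ ∈ T := hdθ
  rw [← heq] at hθT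
  obtain ⟨ψ, _, hψ⟩ := hθT
  exact ⟨ψ, a * φ, hψ⟩
end

section
/- Let \mathfrak{D} be a Weil monoid of minimal degree c and size n ≥ 2, let \mathfrak{l}_{n,c} = ℤ[\mathbb{M}_{n,c}^+] be the monoid algebra of the free monoid on n generators (graded with generators in degree c), let \mathfrak{l}_{n,c} → \mathfrak{d} = ℤ[\mathfrak{D}] be the natural surjection sending the i-th generator to φ_i^{(c)}, and let \mathfrak{n}_\mathfrak{D} be its kernel. Then the Hochschild 2-cohomology class h_\mathfrak{D} ∈ H²_{Hoch}(\mathfrak{d}, \mathfrak{n}_\mathfrak{D}/\mathfrak{n}_\mathfrak{D}²) of the extension 0 → \mathfrak{n}_\mathfrak{D}/\mathfrak{n}_\mathfrak{D}² → \mathfrak{l}_{n,c}/\mathfrak{n}_\mathfrak{D}² → \mathfrak{d} → 0 is non-trivial; equivalently, the extension does not split in the category of associative ℤ-algebras. -/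
section Aux

variable {n : ℕ}

/-- Words of length 1 are `of`. -/
lemma aux_len_one (w : FreeSemigroup (Fin n)) (h : w.length = 1) :
    w = FreeSemigroup.of w.head := by
  obtain ⟨h₀, t⟩ := w
  cases t with
  | nil => rfl
  | cons a l => simp [FreeSemigroup.length] at h

lemma aux_of_mul_of_ne {i j k l : Fin n} (h : (i, j) ≠ (k, l)) :
    FreeSemigroup.of i * FreeSemigroup.of j ≠ FreeSemigroup.of k * FreeSemigroup.of l := by
  intro he
  apply h
  have : FreeSemigroup.mk i [j] = FreeSemigroup.mk k [l] := he
  simp [FreeSemigroup.mk.injEq] at this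
  simp [this.1, this.2]

/-- If `x` vanishes on all length-one words, then `x*y` and `y*x` vanish on length-two words. -/
lemma aux_mul_apply_len2 (x y : MonoidAlgebra ℤ (FreeSemigroup (Fin n)))
    (hx : ∀ t, x.coeff (FreeSemigroup.of t) = 0) (w : FreeSemigroup (Fin n)) (hw : w.length = 2) :
    (x * y).coeff w = 0 ∧ (y * x).coeff w = 0 := by
  classical
  have hxsupp : ∀ a ∈ x.coeff.support, 2 ≤ a.length := by
    intro a ha
    by_contra hlt
    push_neg at hlt
    interval_cases h : a.length
    · simp [FreeSemigroup.length] at h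
    · have := aux_len_one a h
      rw [Finsupp.mem_support_iff, this, hx] at ha
      exact ha rfl
  have hy1 : ∀ b : FreeSemigroup (Fin n), 1 ≤ b.length := by
    intro b; simp [FreeSemigroup.length]
  constructor
  · rw [MonoidAlgebra.mul_apply]
    apply Finset.sum_eq_zero
    intro a₁ ha₁
    apply Finset.sum_eq_zero
    intro a₂ _
    dsimp only
    rw [if_neg]
    intro he
    have : (a₁ * a₂).length = 2 := by rw [he, hw]
    rw [FreeSemigroup.length_mul] at this
    have := hxsupp a₁ ha₁
    have := hy1 a₂
    omega
  · rw [MonoidAlgebra.mul_apply]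
    apply Finset.sum_eq_zero
    intro a₁ _
    apply Finset.sum_eq_zero
    intro a₂ ha₂
    dsimp only
    rw [if_neg]
    intro he
    have : (a₁ * a₂).length = 2 := by rw [he, hw]
    rw [FreeSemigroup.length_mul] at this
    have := hxsupp a₂ ha₂
    have := hy1 a₁
    omega

end Aux

/-- Proposition 2.12 (1) of the paper.  Let `D` be a Weil monoid of minimal degree
`c` and size `n ≥ 2` (a cancellative graded semigroup whose graded pieces `D^{(s)}`,
`s ∈ cℕ`, are finite of the same cardinality `n`), with `φ : Fin n → D` enumerating
`D^{(c)}`.  Let `𝔩 := ℤ[𝕄ₙ⁺]` be the monoid algebra of the free (non-unital) monoid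
on `n` generators (graded with generators in degree `c`), `𝔡 := ℤ[D]`, and let
`f : 𝔩 → 𝔡` be the natural surjection sending the `i`-th generator to `φ i`, with
kernel `𝔫`.  Then the Hochschild class of the extension
`0 → 𝔫/𝔫² → 𝔩/𝔫² → 𝔡 → 0` is non-trivial; equivalently, the extension does not
split in the category of associative ℤ-algebras, i.e. there is no ℤ-linear section
`s` of `f` which is multiplicative modulo `𝔫²` (the ℤ-span of products of two
elements of the kernel). -/
theorem stmt7 {D : Type*} [Semigroup D]
    (hlc : ∀ a b b' : D, a * b = a * b' → b = b')
    (hrc : ∀ a a' b : D, a * b = a' * b → a = a')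
    (deg : D → ℕ) (c n : ℕ) (hc : 1 ≤ c) (hn : 2 ≤ n)
    (hdeg : ∀ a b : D, deg (a * b) = deg a + deg b)
    (hgr : ∀ a : D, ∃ k, 1 ≤ k ∧ deg a = c * k)
    (hfin : ∀ k, 1 ≤ k → {a : D | deg a = c * k}.Finite)
    (hcard : ∀ k, 1 ≤ k → {a : D | deg a = c * k}.ncard = n)
    (φ : Fin n → D) (hφinj : Function.Injective φ)
    (hφran : Set.range φ = {a : D | deg a = c * 1})
    (f : MonoidAlgebra ℤ (FreeSemigroup (Fin n)) →ₙ+* MonoidAlgebra ℤ D)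
    (hf : ∀ w : FreeSemigroup (Fin n),
      f (MonoidAlgebra.single w 1) = MonoidAlgebra.single ((FreeSemigroup.lift φ) w) 1) :
    ¬ ∃ s : MonoidAlgebra ℤ D →ₗ[ℤ] MonoidAlgebra ℤ (FreeSemigroup (Fin n)),
        (∀ a, f (s a) = a) ∧
        (∀ a b, s (a * b) - s a * s b ∈
          Submodule.span ℤ {z : MonoidAlgebra ℤ (FreeSemigroup (Fin n)) |
            ∃ x y, f x = 0 ∧ f y = 0 ∧ z = x * y}) := by
  classical
  rintro ⟨s, hsec, hmul⟩
  -- degrees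
  have hdegφ : ∀ i, deg (φ i) = c := by
    intro i
    have : φ i ∈ Set.range φ := ⟨i, rfl⟩
    rw [hφran] at this
    simpa using this
  have hdlift : ∀ w : FreeSemigroup (Fin n),
      deg (FreeSemigroup.lift φ w) = c * w.length := by
    intro w
    induction w using FreeSemigroup.recOnMul with
    | ih1 x => simp [FreeSemigroup.lift_of, hdegφ]
    | ih2 x y _ ihy =>
        rw [map_mul, hdeg, FreeSemigroup.lift_of, hdegφ, ihy, FreeSemigroup.length_mul,
          FreeSemigroup.length_of, Nat.mul_add, Nat.mul_one]
  -- lift φ w = φ t forces w = of t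
  have hlift1 : ∀ (w : FreeSemigroup (Fin n)) (t : Fin n),
      FreeSemigroup.lift φ w = φ t → w = FreeSemigroup.of t := by
    intro w t h
    have hd : c * w.length = c * 1 := by
      rw [← hdlift w, h, hdegφ, Nat.mul_one]
    have hl : w.length = 1 := Nat.eq_of_mul_eq_mul_left hc hd
    have hw := aux_len_one w hl
    rw [hw] at h ⊢
    rw [FreeSemigroup.lift_of] at h
    rw [hφinj h]
  -- kernel elements vanish on length-one words
  have hker1 : ∀ x : MonoidAlgebra ℤ (FreeSemigroup (Fin n)), f x = 0 →
      ∀ t, x.coeff (FreeSemigroup.of t) = 0 := by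
    intro x hx t
    have key : (f x).coeff (φ t) = x.coeff (FreeSemigroup.of t) := by
      have hx' : x = x.coeff.sum fun w z => MonoidAlgebra.single w z := (MonoidAlgebra.sum_coeff_single x).symm
      have : f x = x.coeff.sum fun w z => MonoidAlgebra.single (FreeSemigroup.lift φ w) z := by
        conv_lhs => rw [hx']
        rw [map_finsuppSum]
        refine Finsupp.sum_congr fun w _ => ?_
        have : (MonoidAlgebra.single w (x.coeff w) : MonoidAlgebra ℤ (FreeSemigroup (Fin n)))
            = (x.coeff w) • MonoidAlgebra.single w 1 := by
          rw [MonoidAlgebra.smul_single', mul_one]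
        rw [this, map_zsmul, hf, MonoidAlgebra.smul_single', mul_one]
      rw [this, MonoidAlgebra.coeff_finsuppSum, Finsupp.sum_apply]
      have : ∀ w ∈ x.coeff.support,
          (MonoidAlgebra.single (FreeSemigroup.lift φ w) (x.coeff w) : MonoidAlgebra ℤ D).coeff (φ t)
          = (fun (w : FreeSemigroup (Fin n)) (z : ℤ) => if w = FreeSemigroup.of t then z else 0) w (x.coeff w) := by
        intro w _
        rw [MonoidAlgebra.coeff_single, Finsupp.single_apply]
        congr 1
        simp only [eq_iff_iff]
        constructor
        · exact hlift1 w t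
        · rintro rfl; rw [FreeSemigroup.lift_of]
      rw [Finsupp.sum_congr (g2 := fun (w : FreeSemigroup (Fin n)) (z : ℤ) => if w = FreeSemigroup.of t then z else 0) this, Finsupp.sum_ite_eq' x.coeff (FreeSemigroup.of t) fun _ z => z]
      split
      · rfl
      · next h => exact (Finsupp.notMem_support_iff.mp h).symm
    rw [← key, hx]
    rfl
  -- find a relation φ i * φ j = φ k * φ l with (i,j) ≠ (k,l)
  have hfin2 := hfin 2 (by norm_num)
  have hS : Finite {a : D | deg a = c * 2} := hfin2.to_subtype
  have hdeg2 : ∀ i j : Fin n, deg (φ i * φ j) = c * 2 := by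
    intro i j; rw [hdeg, hdegφ, hdegφ]; ring
  set g : Fin n × Fin n → {a : D | deg a = c * 2} :=
    fun p => ⟨φ p.1 * φ p.2, hdeg2 p.1 p.2⟩ with hg
  haveI := hfin2.fintype
  have hcards : Fintype.card {a : D | deg a = c * 2} < Fintype.card (Fin n × Fin n) := by
    rw [← Nat.card_eq_fintype_card, Nat.card_coe_set_eq, hcard 2 (by norm_num)]
    simp only [Fintype.card_prod, Fintype.card_fin]
    nlinarith
  obtain ⟨p, q, hpq, hgeq⟩ := Fintype.exists_ne_map_eq_of_card_lt g hcards
  have hrel : φ p.1 * φ p.2 = φ q.1 * φ q.2 := congrArg Subtype.val hgeq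
  -- the distinguished word
  set w₀ : FreeSemigroup (Fin n) := FreeSemigroup.of p.1 * FreeSemigroup.of p.2 with hw₀
  have hw₀len : w₀.length = 2 := by simp [hw₀]
  -- everything in the span vanishes at w₀
  have hspan : ∀ z ∈ Submodule.span ℤ {z : MonoidAlgebra ℤ (FreeSemigroup (Fin n)) |
      ∃ x y, f x = 0 ∧ f y = 0 ∧ z = x * y}, z.coeff w₀ = 0 := by
    intro z hz
    induction hz using Submodule.span_induction with
    | mem z hzz =>
        obtain ⟨x, y, hx, _, rfl⟩ := hzz
        exact (aux_mul_apply_len2 x y (hker1 x hx) w₀ hw₀len).1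
    | zero => rfl
    | add a b _ _ ha hb => rw [MonoidAlgebra.coeff_add, Finsupp.add_apply, ha, hb, add_zero]
    | smul r a _ ha => rw [MonoidAlgebra.coeff_smul, Finsupp.smul_apply, ha, smul_zero]
  -- the kernel corrections
  set m : Fin n → MonoidAlgebra ℤ (FreeSemigroup (Fin n)) :=
    fun i => s (MonoidAlgebra.single (φ i) 1) - MonoidAlgebra.single (FreeSemigroup.of i) 1
    with hm
  have hmker : ∀ i, f (m i) = 0 := by
    intro i
    rw [hm]
    simp only
    rw [map_sub, hsec, hf, FreeSemigroup.lift_of, sub_self]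
  have hsφ : ∀ i, s (MonoidAlgebra.single (φ i) 1)
      = MonoidAlgebra.single (FreeSemigroup.of i) 1 + m i := by
    intro i; exact (add_sub_cancel _ _).symm
  -- the two membership facts
  have hv1 : (MonoidAlgebra.single (FreeSemigroup.of p.1 * FreeSemigroup.of p.2) (1:ℤ)).coeff w₀
      = 1 := by rw [hw₀]; exact Finsupp.single_eq_same
  have hv2 : (MonoidAlgebra.single (FreeSemigroup.of q.1 * FreeSemigroup.of q.2) (1:ℤ)).coeff w₀
      = 0 := by
    apply Finsupp.single_eq_of_ne'
    intro he
    exact aux_of_mul_of_ne (fun hpe => hpq (Prod.ext_iff.mpr ⟨congrArg Prod.fst hpe, congrArg Prod.snd hpe⟩)) (hw₀ ▸ he.symm)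
  have h1 := hmul (MonoidAlgebra.single (φ p.1) 1) (MonoidAlgebra.single (φ p.2) 1)
  have h2 := hmul (MonoidAlgebra.single (φ q.1) 1) (MonoidAlgebra.single (φ q.2) 1)
  rw [MonoidAlgebra.single_mul_single, one_mul] at h1 h2
  rw [hrel] at h1
  have hdiff := Submodule.sub_mem _ h1 h2
  have hval := hspan _ hdiff
  -- compute the coefficient at w₀
  have hcoeff : ∀ i j : Fin n,
      (s (MonoidAlgebra.single (φ i) 1) * s (MonoidAlgebra.single (φ j) 1)).coeff w₀
      = (MonoidAlgebra.single (FreeSemigroup.of i * FreeSemigroup.of j) (1 : ℤ)).coeff w₀ := by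
    intro i j
    rw [hsφ i, hsφ j, add_mul, mul_add, mul_add]
    have e1 : (MonoidAlgebra.single (FreeSemigroup.of i) (1:ℤ) * m j).coeff w₀ = 0 :=
      (aux_mul_apply_len2 (m j) _ (hker1 _ (hmker j)) w₀ hw₀len).2
    have e2 : (m i * (MonoidAlgebra.single (FreeSemigroup.of j) (1:ℤ))).coeff w₀ = 0 :=
      (aux_mul_apply_len2 (m i) _ (hker1 _ (hmker i)) w₀ hw₀len).1
    have e3 : (m i * m j).coeff w₀ = 0 :=
      (aux_mul_apply_len2 (m i) _ (hker1 _ (hmker i)) w₀ hw₀len).1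
    rw [MonoidAlgebra.single_mul_single, one_mul]
    rw [MonoidAlgebra.coeff_add, MonoidAlgebra.coeff_add, MonoidAlgebra.coeff_add, Finsupp.add_apply, Finsupp.add_apply, Finsupp.add_apply, e1, e2, e3]
    ring
  rw [MonoidAlgebra.coeff_sub, MonoidAlgebra.coeff_sub, MonoidAlgebra.coeff_sub, Finsupp.sub_apply, Finsupp.sub_apply, Finsupp.sub_apply] at hval
  rw [hcoeff p.1 p.2, hcoeff q.1 q.2, hv1, hv2] at hval
  linarith
end

section
/- Let \mathfrak{D} be a Weil monoid of minimal degree c whose degree-c piece \mathfrak{D}^{(c)} contains two distinct commuting elements. Then the Lie 2-cohomology class κ_\mathfrak{D} ∈ H²_{Lie}(\mathfrak{d}, \mathfrak{n}_\mathfrak{D}/\mathfrak{n}_\mathfrak{D}²) of the extension 0 → \mathfrak{n}_\mathfrak{D}/\mathfrak{n}_\mathfrak{D}² → \mathfrak{l}_{n,c}/\mathfrak{n}_\mathfrak{D}² → \mathfrak{d} → 0 is non-trivial; equivalently, the extension does not split in the category of Lie ℤ-algebras (with brackets given by commutators). -/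
lemma fs_factor {α : Type*} (i j : α) (a b : FreeSemigroup α)
    (h : a * b = FreeSemigroup.of i * FreeSemigroup.of j) :
    a = FreeSemigroup.of i ∧ b = FreeSemigroup.of j := by
  obtain ⟨h1, t1⟩ := a
  obtain ⟨h2, t2⟩ := b
  rw [FreeSemigroup.mk_mul_mk] at h
  simp only [FreeSemigroup.of, FreeSemigroup.mk.injEq] at h ⊢
  cases t1 <;> simp_all

lemma mul_coeff {α : Type*} (i j : α) (x y : MonoidAlgebra ℤ (FreeSemigroup α)) :
    (x * y).coeff (FreeSemigroup.of i * FreeSemigroup.of j)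
      = x.coeff (FreeSemigroup.of i) * y.coeff (FreeSemigroup.of j) := by
  classical
  induction x using MonoidAlgebra.induction_linear with
  | zero => simp
  | add p q hp hq =>
    rw [add_mul, MonoidAlgebra.coeff_add, MonoidAlgebra.coeff_add, Finsupp.add_apply,
      Finsupp.add_apply]
    rw [hp, hq, add_mul]
  | single u r =>
    induction y using MonoidAlgebra.induction_linear with
    | zero => simp
    | add p q hp hq =>
      rw [mul_add, MonoidAlgebra.coeff_add, MonoidAlgebra.coeff_add, Finsupp.add_apply,
        Finsupp.add_apply]
      rw [hp, hq, mul_add]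
    | single v t =>
      rw [show (MonoidAlgebra.single u r : MonoidAlgebra ℤ (FreeSemigroup α)) *
          MonoidAlgebra.single v t = MonoidAlgebra.single (u*v) (r*t) from
          MonoidAlgebra.single_mul_single ..]
      rw [MonoidAlgebra.coeff_single, MonoidAlgebra.coeff_single, MonoidAlgebra.coeff_single]
      rw [Finsupp.single_apply, Finsupp.single_apply, Finsupp.single_apply]
      by_cases hu : u = FreeSemigroup.of i
      · by_cases hv : v = FreeSemigroup.of j
        · subst hu hv; simp
        · subst hu
          rw [if_pos rfl, if_neg (fun h => hv (fs_factor i j _ _ h).2),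
            if_neg hv, mul_zero]
      · rw [if_neg (fun h => hu (fs_factor i j _ _ h).1), if_neg hu, zero_mul]

lemma lift_eq_iff {D : Type*} [Semigroup D] (deg : D → ℕ) (c n : ℕ) (hc : 1 ≤ c)
    (hdeg : ∀ a b : D, deg (a * b) = deg a + deg b)
    (φ : Fin n → D) (hφinj : Function.Injective φ)
    (hφran : Set.range φ = {a : D | deg a = c * 1})
    (i : Fin n) (w : FreeSemigroup (Fin n)) (h : FreeSemigroup.lift φ w = φ i) :
    w = FreeSemigroup.of i := by
  have hdφ : ∀ a : Fin n, deg (φ a) = c := by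
    intro a
    have : φ a ∈ Set.range φ := Set.mem_range_self a
    rw [hφran] at this
    simpa using this
  have hlen : ∀ w : FreeSemigroup (Fin n), deg (FreeSemigroup.lift φ w) = c * w.length := by
    intro w
    induction w with
    | ih1 x => simp [FreeSemigroup.lift_of, hdφ]
    | ih2 x y _ ihy =>
      rw [map_mul, hdeg, FreeSemigroup.lift_of, hdφ, ihy, FreeSemigroup.length_mul,
        FreeSemigroup.length_of, Nat.mul_add, Nat.mul_one]
  have h1 : c * w.length = c * 1 := by
    rw [← hlen, h, Nat.mul_one, hdφ]
  have h2 : w.length = 1 := Nat.eq_of_mul_eq_mul_left (by omega) h1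
  obtain ⟨hd, tl⟩ := w
  have : tl = [] := by
    simp only [FreeSemigroup.length] at h2
    exact List.length_eq_zero_iff.mp (by omega)
  subst this
  have : φ hd = φ i := by
    have := h
    rwa [show (⟨hd, []⟩ : FreeSemigroup (Fin n)) = FreeSemigroup.of hd from rfl,
      FreeSemigroup.lift_of] at this
  rw [hφinj this]
  rfl

lemma coeff_f {D : Type*} [Semigroup D] (deg : D → ℕ) (c n : ℕ) (hc : 1 ≤ c)
    (hdeg : ∀ a b : D, deg (a * b) = deg a + deg b)
    (φ : Fin n → D) (hφinj : Function.Injective φ)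
    (hφran : Set.range φ = {a : D | deg a = c * 1})
    (f : MonoidAlgebra ℤ (FreeSemigroup (Fin n)) →ₙ+* MonoidAlgebra ℤ D)
    (hf : ∀ w : FreeSemigroup (Fin n),
      f (MonoidAlgebra.single w 1) = MonoidAlgebra.single ((FreeSemigroup.lift φ) w) 1)
    (i : Fin n) (x : MonoidAlgebra ℤ (FreeSemigroup (Fin n))) :
    (f x).coeff (φ i) = x.coeff (FreeSemigroup.of i) := by
  classical
  induction x using MonoidAlgebra.induction_linear with
  | zero => simp
  | add p q hp hq =>
    rw [map_add, MonoidAlgebra.coeff_add, MonoidAlgebra.coeff_add, Finsupp.add_apply,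
      Finsupp.add_apply]
    rw [hp, hq]
  | single w r =>
    have h1 : (MonoidAlgebra.single w r : MonoidAlgebra ℤ (FreeSemigroup (Fin n)))
        = r • MonoidAlgebra.single w 1 := by
      rw [MonoidAlgebra.smul_single', mul_one]
    rw [h1, map_zsmul, hf w]
    rw [MonoidAlgebra.coeff_smul, MonoidAlgebra.coeff_smul, Finsupp.smul_apply,
      Finsupp.smul_apply, MonoidAlgebra.coeff_single, MonoidAlgebra.coeff_single]
    rw [Finsupp.single_apply, Finsupp.single_apply]
    by_cases hw : w = FreeSemigroup.of i
    · subst hw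
      rw [if_pos (FreeSemigroup.lift_of φ i), if_pos rfl]
    · rw [if_neg (fun h => hw (lift_eq_iff deg c n hc hdeg φ hφinj hφran i w h)),
        if_neg hw]

/-- Proposition 2.12 (2) of the paper.  Let `D` be a Weil monoid of minimal degree
`c` and size `n` whose degree-`c` piece contains two distinct commuting elements.
With `𝔩 := ℤ[𝕄ₙ⁺]` the monoid algebra of the free graded monoid on `n` generators,
`𝔡 := ℤ[D]`, `f : 𝔩 → 𝔡` the natural surjection (generator `i ↦ φ i`) with kernel
`𝔫`, the Lie class of the extension `0 → 𝔫/𝔫² → 𝔩/𝔫² → 𝔡 → 0` is non-trivial;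
equivalently the extension does not split in the category of Lie ℤ-algebras (with
brackets the commutators), i.e. there is no ℤ-linear section `s` of `f` which is
compatible with commutator brackets modulo `𝔫²`. -/
theorem stmt8 {D : Type*} [Semigroup D]
    (hlc : ∀ a b b' : D, a * b = a * b' → b = b')
    (hrc : ∀ a a' b : D, a * b = a' * b → a = a')
    (deg : D → ℕ) (c n : ℕ) (hc : 1 ≤ c) (hn : 1 ≤ n)
    (hdeg : ∀ a b : D, deg (a * b) = deg a + deg b)
    (hgr : ∀ a : D, ∃ k, 1 ≤ k ∧ deg a = c * k)
    (hfin : ∀ k, 1 ≤ k → {a : D | deg a = c * k}.Finite)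
    (hcard : ∀ k, 1 ≤ k → {a : D | deg a = c * k}.ncard = n)
    (hcomm2 : ∃ X Y : D, X ≠ Y ∧ deg X = c * 1 ∧ deg Y = c * 1 ∧ X * Y = Y * X)
    (φ : Fin n → D) (hφinj : Function.Injective φ)
    (hφran : Set.range φ = {a : D | deg a = c * 1})
    (f : MonoidAlgebra ℤ (FreeSemigroup (Fin n)) →ₙ+* MonoidAlgebra ℤ D)
    (hf : ∀ w : FreeSemigroup (Fin n),
      f (MonoidAlgebra.single w 1) = MonoidAlgebra.single ((FreeSemigroup.lift φ) w) 1) :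
    ¬ ∃ s : MonoidAlgebra ℤ D →ₗ[ℤ] MonoidAlgebra ℤ (FreeSemigroup (Fin n)),
        (∀ a, f (s a) = a) ∧
        (∀ a b, s (a * b) - s (b * a) - (s a * s b - s b * s a) ∈
          Submodule.span ℤ {z : MonoidAlgebra ℤ (FreeSemigroup (Fin n)) |
            ∃ x y, f x = 0 ∧ f y = 0 ∧ z = x * y}) := by
  classical
  rintro ⟨s, hs1, hs2⟩
  obtain ⟨X, Y, hXY, hdX, hdY, hcomm⟩ := hcomm2
  obtain ⟨i, hi⟩ : X ∈ Set.range φ := by rw [hφran]; exact hdX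
  obtain ⟨j, hj⟩ : Y ∈ Set.range φ := by rw [hφran]; exact hdY
  set a : MonoidAlgebra ℤ D := MonoidAlgebra.single X 1 with ha
  set b : MonoidAlgebra ℤ D := MonoidAlgebra.single Y 1 with hb
  have hab : a * b = b * a := by
    rw [ha, hb, MonoidAlgebra.single_mul_single, MonoidAlgebra.single_mul_single, hcomm]
  have hmem := hs2 a b
  rw [hab, sub_self, zero_sub] at hmem
  have hmem' : s a * s b - s b * s a ∈ Submodule.span ℤ
      {z : MonoidAlgebra ℤ (FreeSemigroup (Fin n)) | ∃ x y, f x = 0 ∧ f y = 0 ∧ z = x * y} := by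
    have := Submodule.neg_mem _ hmem
    rwa [neg_neg] at this
  set L : MonoidAlgebra ℤ (FreeSemigroup (Fin n)) →ₗ[ℤ] ℤ :=
    (Finsupp.lapply (FreeSemigroup.of i * FreeSemigroup.of j)).comp
      (MonoidAlgebra.coeffLinearEquiv ℤ).toLinearMap with hL
  have hspan : Submodule.span ℤ
      {z : MonoidAlgebra ℤ (FreeSemigroup (Fin n)) | ∃ x y, f x = 0 ∧ f y = 0 ∧ z = x * y}
      ≤ LinearMap.ker L := by
    rw [Submodule.span_le]
    rintro z ⟨x, y, hx, hy, rfl⟩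
    have h1 : L (x * y) = x.coeff (FreeSemigroup.of i) * y.coeff (FreeSemigroup.of j) :=
      mul_coeff i j x y
    have h2 : x.coeff (FreeSemigroup.of i) = 0 := by
      rw [← coeff_f deg c n hc hdeg φ hφinj hφran f hf i x, hx]
      rfl
    simp only [SetLike.mem_coe, LinearMap.mem_ker, h1, h2, zero_mul]
  have hLzero : L (s a * s b - s b * s a) = 0 := hspan hmem'
  have hsa_i : (s a).coeff (FreeSemigroup.of i) = 1 := by
    rw [← coeff_f deg c n hc hdeg φ hφinj hφran f hf i (s a), hs1 a, ha, hi]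
    exact Finsupp.single_eq_same
  have hsb_j : (s b).coeff (FreeSemigroup.of j) = 1 := by
    rw [← coeff_f deg c n hc hdeg φ hφinj hφran f hf j (s b), hs1 b, hb, hj]
    exact Finsupp.single_eq_same
  have hsa_j : (s a).coeff (FreeSemigroup.of j) = 0 := by
    rw [← coeff_f deg c n hc hdeg φ hφinj hφran f hf j (s a), hs1 a, ha, hj]
    exact Finsupp.single_eq_of_ne (Ne.symm hXY)
  have hsb_i : (s b).coeff (FreeSemigroup.of i) = 0 := by
    rw [← coeff_f deg c n hc hdeg φ hφinj hφran f hf i (s b), hs1 b, hb, hi]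
    exact Finsupp.single_eq_of_ne hXY
  have hcompute : L (s a * s b - s b * s a) = 1 := by
    rw [map_sub]
    have e1 : L (s b * s a) = (s b).coeff (FreeSemigroup.of i) * (s a).coeff (FreeSemigroup.of j) :=
      mul_coeff i j (s b) (s a)
    have e2 : L (s a * s b) = (s a).coeff (FreeSemigroup.of i) * (s b).coeff (FreeSemigroup.of j) :=
      mul_coeff i j (s a) (s b)
    rw [e1, e2, hsa_i, hsb_j, hsa_j, hsb_i]
    ring
  rw [hLzero] at hcompute
  exact absurd hcompute (by norm_num)
end

section
/- Let \mathfrak{D} be a Weil monoid of size n = 2 embedded in a group, with \mathfrak{D}^{(c)} = {φ₁, φ₂}. Under the isomorphism of the free monoid algebra with the ideal (T₁,T₂) in the non-commutative polynomial ring ℤ⟨T₁,T₂⟩, the kernel \mathfrak{n}_\mathfrak{D} of the surjection onto ℤ[\mathfrak{D}] is the two-sided ideal generated by the two quadratic polynomials T₂T₁ − T₁T₂ and T₂² − T₁², and these two polynomials form a ℤ-basis of the degree-2c homogeneous component of \mathfrak{n}_\mathfrak{D}. -/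
open FreeSemigroup MonoidAlgebra

/-- Normal words: `k` zeros followed by letter `i`. -/
private def nwd : ℕ → Fin 2 → FreeSemigroup (Fin 2)
  | 0, i => .of i
  | k+1, i => .of 0 * nwd k i

private lemma nwd_zero (i : Fin 2) : nwd 0 i = .of i := rfl
private lemma nwd_succ (k : ℕ) (i : Fin 2) : nwd (k+1) i = .of 0 * nwd k i := rfl

private def par (w : FreeSemigroup (Fin 2)) : Fin 2 := w.head + w.tail.sum

private lemma nwd_length : ∀ k i, (nwd k i).length = k + 1
  | 0, _ => rfl
  | k+1, i => by
      rw [nwd_succ, FreeSemigroup.length_mul, nwd_length k i, FreeSemigroup.length_of]; omega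

private lemma mk_cons (h a : Fin 2) (t : List (Fin 2)) :
    (⟨h, a :: t⟩ : FreeSemigroup (Fin 2)) = .of h * ⟨a, t⟩ := rfl

private lemma fin2_cases {P : Fin 2 → Prop} (h0 : P 0) (h1 : P 1) : ∀ i, P i := fun i => by
  obtain ⟨v, hv⟩ := i
  match v with
  | 0 => exact h0
  | 1 => exact h1

section
variable (I : TwoSidedIdeal (MonoidAlgebra ℤ (FreeSemigroup (Fin 2))))

private abbrev WRel (u v : FreeSemigroup (Fin 2)) : Prop :=
  single u (1:ℤ) - single v 1 ∈ I

variable {I}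

private lemma wrel_refl (u : FreeSemigroup (Fin 2)) : WRel I u u := by
  show _ ∈ I; rw [sub_self]; exact I.zero_mem

private lemma wrel_trans {u v t : FreeSemigroup (Fin 2)} (h : WRel I u v) (h' : WRel I v t) :
    WRel I u t := by
  have := I.add_mem h h'
  simpa only [WRel, sub_add_sub_cancel] using this

private lemma wrel_mulL (t : Fin 2) {u v : FreeSemigroup (Fin 2)} (h : WRel I u v) :
    WRel I (.of t * u) (.of t * v) := by
  have := I.mul_mem_left (single (.of t) (1:ℤ)) _ h
  simpa only [WRel, mul_sub, MonoidAlgebra.single_mul_single, one_mul] using this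

private lemma wrel_mulR (t : FreeSemigroup (Fin 2)) {u v : FreeSemigroup (Fin 2)}
    (h : WRel I u v) : WRel I (u * t) (v * t) := by
  have := I.mul_mem_right _ (single t (1:ℤ)) h
  simpa only [WRel, sub_mul, MonoidAlgebra.single_mul_single, one_mul] using this

variable
    (h1 : single (FreeSemigroup.of 1 * FreeSemigroup.of 0) (1:ℤ)
            - single (FreeSemigroup.of 0 * FreeSemigroup.of 1) 1 ∈ I)
    (h2 : single (FreeSemigroup.of 1 * FreeSemigroup.of 1) (1:ℤ)
            - single (FreeSemigroup.of 0 * FreeSemigroup.of 0) 1 ∈ I)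

include h1 h2 in
private lemma rel_one_nwd : ∀ b j, WRel I (.of 1 * nwd b j) (nwd (b+1) (1 + j)) := by
  intro b
  induction b with
  | zero =>
      refine fin2_cases ?_ ?_
      · rw [nwd_zero, nwd_succ, nwd_zero, show ((1:Fin 2) + 0) = 1 from rfl]
        exact h1
      · rw [nwd_zero, nwd_succ, nwd_zero, show ((1:Fin 2) + 1) = 0 from rfl]
        exact h2
  | succ b ih =>
      intro j
      have e1 : FreeSemigroup.of (1:Fin 2) * nwd (b+1) j
          = (.of 1 * .of 0) * nwd b j := by rw [nwd_succ, mul_assoc]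
      have s1 : WRel I (.of 1 * nwd (b+1) j) (.of 0 * (.of 1 * nwd b j)) := by
        rw [e1, ← mul_assoc]
        exact (wrel_mulR (nwd b j) h1)
      have s2 : WRel I (.of 0 * (.of 1 * nwd b j)) (.of 0 * nwd (b+1) (1+j)) :=
        wrel_mulL 0 (ih j)
      exact wrel_trans s1 s2

include h1 h2 in
private lemma rel_letter_nwd : ∀ (i : Fin 2) b j, WRel I (.of i * nwd b j) (nwd (b+1) (i + j)) := by
  refine fin2_cases ?_ ?_
  · intro b j
    rw [show ((0 : Fin 2) + j) = j from zero_add j, ← nwd_succ]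
    exact wrel_refl _
  · exact rel_one_nwd h1 h2

include h1 h2 in
private lemma rel_nf (w : FreeSemigroup (Fin 2)) :
    WRel I w (nwd (w.length - 1) (par w)) := by
  have main : ∀ (t : List (Fin 2)) (h : Fin 2),
      WRel I ⟨h, t⟩ (nwd t.length (h + t.sum)) := by
    intro t
    induction t with
    | nil =>
        intro h
        rw [List.length_nil, show ((h : Fin 2) + List.sum []) = h by simp, nwd_zero]
        exact wrel_refl _
    | cons a t ih =>
        intro h
        rw [mk_cons]
        have s1 : WRel I (.of h * (⟨a, t⟩ : FreeSemigroup (Fin 2)))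
            (.of h * nwd t.length (a + t.sum)) := wrel_mulL h (ih a)
        have s2 := rel_letter_nwd h1 h2 h t.length (a + t.sum)
        rw [List.length_cons, List.sum_cons]
        exact wrel_trans s1 s2
  obtain ⟨h, t⟩ := w
  have e : (FreeSemigroup.mk h t).length - 1 = t.length := by
    simp [FreeSemigroup.length]
  rw [e]
  exact main t h

end

private lemma fin2_ne : (1 : Fin 2) ≠ 0 := by decide

deriving instance DecidableEq for FreeSemigroup

/-- Example 2.14 (1) of the paper.  Let `D` be a Weil monoid of minimal degree `c`
and size `n = 2` embedded (as always possible) in a group `H`, with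
`D^{(c)} = {φ₁, φ₂}` (here `φ 0 = φ₁` plays the role of `T₁` and `φ 1 = φ₂` of
`T₂`); in this case `φ₂φ₁ = φ₁φ₂` and `φ₂² = φ₁²`.  Under the identification of the
monoid algebra `ℤ[𝕄₂⁺]` with the ideal `(T₁,T₂)` of the non-commutative polynomial
ring `ℤ⟨T₁,T₂⟩`, the kernel `𝔫_D` of the surjection `f : ℤ[𝕄₂⁺] → ℤ[D]` is the
two-sided ideal generated by the quadratic polynomials `T₂T₁ − T₁T₂` and
`T₂² − T₁²`, and these two polynomials form a ℤ-basis of the homogeneous component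
of `𝔫_D` of degree `2c` (elements supported on words of length `2`). -/
theorem stmt9 {H : Type*} [Group H] (D : Set H)
    (hDmul : ∀ a ∈ D, ∀ b ∈ D, a * b ∈ D)
    (deg : H → ℕ) (c : ℕ) (hc : 1 ≤ c)
    (hdeg : ∀ a ∈ D, ∀ b ∈ D, deg (a * b) = deg a + deg b)
    (hgr : ∀ a ∈ D, ∃ k, 1 ≤ k ∧ deg a = c * k)
    (hfin : ∀ k, 1 ≤ k → {a | a ∈ D ∧ deg a = c * k}.Finite)
    (hcard : ∀ k, 1 ≤ k → {a | a ∈ D ∧ deg a = c * k}.ncard = 2)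
    (φ : Fin 2 → H) (hφinj : Function.Injective φ) (hφD : ∀ i, φ i ∈ D)
    (hφran : Set.range φ = {a | a ∈ D ∧ deg a = c * 1})
    (hcomm : φ 1 * φ 0 = φ 0 * φ 1) (hsq : φ 1 * φ 1 = φ 0 * φ 0)
    (Dm : Subsemigroup H) (hDm : (Dm : Set H) = D)
    (f : MonoidAlgebra ℤ (FreeSemigroup (Fin 2)) →ₙ+* MonoidAlgebra ℤ Dm)
    (φ' : Fin 2 → Dm) (hφ' : ∀ i, (φ' i : H) = φ i)
    (hf : ∀ w : FreeSemigroup (Fin 2),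
      f (MonoidAlgebra.single w 1) = MonoidAlgebra.single ((FreeSemigroup.lift φ') w) 1) :
    {x : MonoidAlgebra ℤ (FreeSemigroup (Fin 2)) | f x = 0}
      = {x | x ∈ TwoSidedIdeal.span
          {MonoidAlgebra.single (FreeSemigroup.of 1 * FreeSemigroup.of 0) (1 : ℤ)
             - MonoidAlgebra.single (FreeSemigroup.of 0 * FreeSemigroup.of 1) 1,
           MonoidAlgebra.single (FreeSemigroup.of 1 * FreeSemigroup.of 1) (1 : ℤ)
             - MonoidAlgebra.single (FreeSemigroup.of 0 * FreeSemigroup.of 0) 1}} ∧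
    (∀ x : MonoidAlgebra ℤ (FreeSemigroup (Fin 2)), f x = 0 →
      (∀ w ∈ x.coeff.support, w.length = 2) →
      ∃! ab : ℤ × ℤ,
        x = ab.1 • (MonoidAlgebra.single (FreeSemigroup.of 1 * FreeSemigroup.of 0) (1 : ℤ)
                      - MonoidAlgebra.single (FreeSemigroup.of 0 * FreeSemigroup.of 1) 1)
            + ab.2 • (MonoidAlgebra.single (FreeSemigroup.of 1 * FreeSemigroup.of 1) (1 : ℤ)
                      - MonoidAlgebra.single (FreeSemigroup.of 0 * FreeSemigroup.of 0) 1)) := by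
  classical
  have hc0 : 0 < c := hc
  set g1 : MonoidAlgebra ℤ (FreeSemigroup (Fin 2)) :=
    MonoidAlgebra.single (FreeSemigroup.of 1 * FreeSemigroup.of 0) (1 : ℤ)
      - MonoidAlgebra.single (FreeSemigroup.of 0 * FreeSemigroup.of 1) 1 with hg1
  set g2 : MonoidAlgebra ℤ (FreeSemigroup (Fin 2)) :=
    MonoidAlgebra.single (FreeSemigroup.of 1 * FreeSemigroup.of 1) (1 : ℤ)
      - MonoidAlgebra.single (FreeSemigroup.of 0 * FreeSemigroup.of 0) 1 with hg2
  set I : TwoSidedIdeal (MonoidAlgebra ℤ (FreeSemigroup (Fin 2))) :=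
    TwoSidedIdeal.span {g1, g2} with hI
  have hg1I : g1 ∈ I := TwoSidedIdeal.subset_span (Set.mem_insert _ _)
  have hg2I : g2 ∈ I := TwoSidedIdeal.subset_span (Set.mem_insert_of_mem _ rfl)
  -- basic facts about values in `H`
  have hvmem : ∀ d : Dm, (d : H) ∈ D := fun d => hDm ▸ d.2
  have hdegφ : ∀ i, deg (φ i) = c := by
    intro i
    have : φ i ∈ Set.range φ := ⟨i, rfl⟩
    rw [hφran] at this
    simpa using this.2
  have hcoe_mul : ∀ u v : Dm, ((u * v : Dm) : H) = (u : H) * (v : H) := fun _ _ => rfl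
  have hvv : ∀ i j : Fin 2,
      ((FreeSemigroup.lift φ' (.of i * .of j) : Dm) : H) = φ i * φ j := by
    intro i j
    rw [map_mul, FreeSemigroup.lift_of, FreeSemigroup.lift_of, hcoe_mul, hφ', hφ']
  have hdegval : ∀ w : FreeSemigroup (Fin 2),
      deg ((FreeSemigroup.lift φ' w : Dm) : H) = c * w.length := by
    intro w
    induction w using FreeSemigroup.recOnMul with
    | ih1 x =>
        rw [FreeSemigroup.lift_of, hφ', hdegφ, FreeSemigroup.length_of, mul_one]
    | ih2 x y _ ih =>
        rw [map_mul, hcoe_mul, FreeSemigroup.lift_of, hφ',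
          hdeg _ (hφD x) _ (hvmem _), hdegφ, ih, FreeSemigroup.length_mul,
          FreeSemigroup.length_of]
        ring
  have hval_nw : ∀ (k : ℕ) (i : Fin 2),
      ((FreeSemigroup.lift φ' (nwd k i) : Dm) : H) = (φ 0) ^ k * φ i := by
    intro k
    induction k with
    | zero => intro i; rw [nwd_zero, FreeSemigroup.lift_of, hφ', pow_zero, one_mul]
    | succ k ih =>
        intro i
        rw [nwd_succ, map_mul, hcoe_mul, FreeSemigroup.lift_of, hφ', ih, pow_succ']
        rw [mul_assoc]
  -- injectivity of values on normal words
  have hinj_nw : ∀ (a : ℕ) (i : Fin 2) (b : ℕ) (j : Fin 2),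
      FreeSemigroup.lift φ' (nwd a i) = FreeSemigroup.lift φ' (nwd b j) →
      a = b ∧ i = j := by
    intro a i b j hEq
    have hH : (φ 0) ^ a * φ i = (φ 0) ^ b * φ j := by
      rw [← hval_nw, ← hval_nw, hEq]
    have hdegEq : c * (a + 1) = c * (b + 1) := by
      rw [← nwd_length a i, ← nwd_length b j, ← hdegval, ← hdegval, hEq]
    have hab : a = b := by
      have := Nat.eq_of_mul_eq_mul_left hc0 hdegEq
      omega
    subst hab
    refine ⟨rfl, hφinj ?_⟩
    exact mul_left_cancel hH
  set NS : Set (FreeSemigroup (Fin 2)) := {w | ∃ k i, w = nwd k i} with hNS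
  have hinjOn : Set.InjOn (⇑(FreeSemigroup.lift φ')) NS := by
    rintro u ⟨a, i, rfl⟩ v ⟨b, j, rfl⟩ h
    obtain ⟨rfl, rfl⟩ := hinj_nw a i b j h
    rfl
  -- f of a single
  have hfs : ∀ (w : FreeSemigroup (Fin 2)) (r : ℤ),
      f (MonoidAlgebra.single w r) = MonoidAlgebra.single (FreeSemigroup.lift φ' w) r := by
    intro w r
    have e : (MonoidAlgebra.single w r : MonoidAlgebra ℤ (FreeSemigroup (Fin 2)))
        = r • MonoidAlgebra.single w 1 := by
      rw [MonoidAlgebra.smul_single', mul_one]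
    rw [e, map_zsmul, hf, MonoidAlgebra.smul_single', mul_one]
  -- f as mapDomain
  have hf' : ∀ x : MonoidAlgebra ℤ (FreeSemigroup (Fin 2)),
      f x = MonoidAlgebra.ofCoeff (Finsupp.mapDomain (⇑(FreeSemigroup.lift φ')) x.coeff) := by
    intro x
    induction x using MonoidAlgebra.induction_linear with
    | zero => rw [map_zero, MonoidAlgebra.coeff_zero, Finsupp.mapDomain_zero, MonoidAlgebra.ofCoeff_zero]
    | add p q hp hq => rw [map_add, MonoidAlgebra.coeff_add, Finsupp.mapDomain_add, MonoidAlgebra.ofCoeff_add, hp, hq]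
    | single w r => rw [MonoidAlgebra.coeff_single, Finsupp.mapDomain_single, MonoidAlgebra.ofCoeff_single]; exact hfs w r
  -- generators are in the kernel
  have hveq : ∀ i j i' j' : Fin 2, φ i * φ j = φ i' * φ j' →
      FreeSemigroup.lift φ' (.of i * .of j) = FreeSemigroup.lift φ' (.of i' * .of j') := by
    intro i j i' j' h
    apply Subtype.ext
    rw [hvv, hvv, h]
  have hker1 : f g1 = 0 := by
    rw [hg1, map_sub, hf, hf, hveq 1 0 0 1 hcomm, sub_self]
  have hker2 : f g2 = 0 := by
    rw [hg2, map_sub, hf, hf, hveq 1 1 0 0 hsq, sub_self]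
  have hIker : ∀ x ∈ I, f x = 0 := by
    intro x hx
    have hmem : x ∈ TwoSidedIdeal.ker f := by
      refine TwoSidedIdeal.mem_span_iff.mp hx _ ?_
      rintro y (rfl | rfl)
      · exact (TwoSidedIdeal.mem_ker f).mpr hker1
      · exact (TwoSidedIdeal.mem_ker f).mpr hker2
    exact (TwoSidedIdeal.mem_ker f).mp hmem
  -- the normal form map
  set nf : FreeSemigroup (Fin 2) → FreeSemigroup (Fin 2) :=
    fun w => nwd (w.length - 1) (par w) with hnf
  have hrelnf : ∀ w, MonoidAlgebra.single w (1:ℤ) - MonoidAlgebra.single (nf w) 1 ∈ I :=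
    fun w => rel_nf hg1I hg2I w
  have hsum_single : ∀ z : MonoidAlgebra ℤ (FreeSemigroup (Fin 2)),
      z = ∑ w ∈ z.coeff.support, MonoidAlgebra.single w (z.coeff w) := fun z => (MonoidAlgebra.sum_coeff_single z).symm
  constructor
  · -- kernel = span
    ext x
    simp only [Set.mem_setOf_eq]
    constructor
    · intro hx0
      set y : MonoidAlgebra ℤ (FreeSemigroup (Fin 2)) :=
        ∑ w ∈ x.coeff.support,
          x.coeff w • (MonoidAlgebra.single w (1:ℤ) - MonoidAlgebra.single (nf w) 1) with hy
      have hyI : y ∈ I := by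
        refine sum_mem fun w _ => ?_
        exact zsmul_mem (hrelnf w) _
      have hxy : x - y = MonoidAlgebra.ofCoeff (Finsupp.mapDomain nf x.coeff) := by
        have e1 : ∑ w ∈ x.coeff.support,
            (MonoidAlgebra.single w (x.coeff w)
              - x.coeff w • (MonoidAlgebra.single w (1:ℤ) - MonoidAlgebra.single (nf w) 1))
            = x - y := by
          rw [Finset.sum_sub_distrib, hy, ← hsum_single]
        have e2 : ∀ w ∈ x.coeff.support,
            (MonoidAlgebra.single w (x.coeff w)
              - x.coeff w • (MonoidAlgebra.single w (1:ℤ) - MonoidAlgebra.single (nf w) 1))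
            = MonoidAlgebra.single (nf w) (x.coeff w) := by
          intro w _
          rw [smul_sub, MonoidAlgebra.smul_single', mul_one, MonoidAlgebra.smul_single',
            mul_one, sub_sub_cancel]
        rw [← e1, Finset.sum_congr rfl e2, Finsupp.mapDomain, MonoidAlgebra.ofCoeff_finsuppSum]
        rfl
      have hfxy : Finsupp.mapDomain (⇑(FreeSemigroup.lift φ')) (Finsupp.mapDomain nf x.coeff) = 0 := by
        have hz : f (x - y) = 0 := by rw [map_sub, hx0, hIker y hyI, sub_zero]
        rw [hf', hxy] at hz
        exact MonoidAlgebra.ofCoeff_eq_zero.mp hz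
      have hmd0 : Finsupp.mapDomain nf x.coeff = 0 := by
        refine Finsupp.mapDomain_injOn NS hinjOn ?_ ?_ ?_
        · intro w hw
          have hw' : w ∈ (Finsupp.mapDomain nf x.coeff).support := hw
          have hmem := Finsupp.mapDomain_support hw'
          obtain ⟨u, _, rfl⟩ := Finset.mem_image.mp hmem
          exact ⟨_, _, rfl⟩
        · intro w hw
          rw [Finsupp.support_zero] at hw
          simp at hw
        · rw [hfxy, Finsupp.mapDomain_zero]
      have : x = y := by
        have : x - y = 0 := by rw [hxy, hmd0, MonoidAlgebra.ofCoeff_zero]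
        exact sub_eq_zero.mp this
      rw [this]
      exact hyI
    · intro hx
      exact hIker x hx
  · -- degree-two component
    intro x hx0 hlen
    have hw4 : ∀ (h a : Fin 2), (⟨h, [a]⟩ : FreeSemigroup (Fin 2))
        = FreeSemigroup.of 1 * FreeSemigroup.of 0
        ∨ (⟨h, [a]⟩ : FreeSemigroup (Fin 2)) = FreeSemigroup.of 0 * FreeSemigroup.of 1
        ∨ (⟨h, [a]⟩ : FreeSemigroup (Fin 2)) = FreeSemigroup.of 1 * FreeSemigroup.of 1
        ∨ (⟨h, [a]⟩ : FreeSemigroup (Fin 2)) = FreeSemigroup.of 0 * FreeSemigroup.of 0 := by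
      refine fin2_cases (fin2_cases ?_ ?_) (fin2_cases ?_ ?_)
      · exact Or.inr (Or.inr (Or.inr rfl))
      · exact Or.inr (Or.inl rfl)
      · exact Or.inl rfl
      · exact Or.inr (Or.inr (Or.inl rfl))
    have hsupp4 : x.coeff.support ⊆
        {FreeSemigroup.of 1 * FreeSemigroup.of 0, FreeSemigroup.of 0 * FreeSemigroup.of 1,
         FreeSemigroup.of 1 * FreeSemigroup.of 1, FreeSemigroup.of 0 * FreeSemigroup.of 0} := by
      intro w hw
      obtain ⟨h, t⟩ := w
      have hl : t.length = 1 := by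
        have := hlen _ hw
        simp only [FreeSemigroup.length] at this
        omega
      obtain ⟨a, rfl⟩ := List.length_eq_one_iff.mp hl
      simp only [Finset.mem_insert, Finset.mem_singleton]
      exact hw4 h a
    have hxS : x = ∑ w ∈
        ({FreeSemigroup.of 1 * FreeSemigroup.of 0, FreeSemigroup.of 0 * FreeSemigroup.of 1,
          FreeSemigroup.of 1 * FreeSemigroup.of 1, FreeSemigroup.of 0 * FreeSemigroup.of 0}
          : Finset (FreeSemigroup (Fin 2))), MonoidAlgebra.single w (x.coeff w) := by
      conv_lhs => rw [hsum_single x]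
      exact Finset.sum_subset hsupp4 fun w _ hw => by
        simp [Finsupp.notMem_support_iff.mp hw]
    set d1 := FreeSemigroup.lift φ' (FreeSemigroup.of 0 * FreeSemigroup.of 1) with hd1
    set d2 := FreeSemigroup.lift φ' (FreeSemigroup.of 0 * FreeSemigroup.of 0) with hd2
    have h10 : FreeSemigroup.lift φ' (FreeSemigroup.of 1 * FreeSemigroup.of 0) = d1 :=
      hveq 1 0 0 1 hcomm
    have h11 : FreeSemigroup.lift φ' (FreeSemigroup.of 1 * FreeSemigroup.of 1) = d2 :=
      hveq 1 1 0 0 hsq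
    have hd12 : d1 ≠ d2 := by
      intro h
      have : φ 0 * φ 1 = φ 0 * φ 0 := by rw [← hvv 0 1, ← hvv 0 0, ← hd1, ← hd2, h]
      exact fin2_ne (hφinj (mul_left_cancel this))
    have hxE : x = MonoidAlgebra.single (FreeSemigroup.of 1 * FreeSemigroup.of 0)
          (x.coeff (FreeSemigroup.of 1 * FreeSemigroup.of 0))
        + (MonoidAlgebra.single (FreeSemigroup.of 0 * FreeSemigroup.of 1)
            (x.coeff (FreeSemigroup.of 0 * FreeSemigroup.of 1))
        + (MonoidAlgebra.single (FreeSemigroup.of 1 * FreeSemigroup.of 1)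
            (x.coeff (FreeSemigroup.of 1 * FreeSemigroup.of 1))
        + MonoidAlgebra.single (FreeSemigroup.of 0 * FreeSemigroup.of 0)
            (x.coeff (FreeSemigroup.of 0 * FreeSemigroup.of 0)))) := by
      conv_lhs => rw [hxS]
      rw [Finset.sum_insert (by decide), Finset.sum_insert (by decide),
        Finset.sum_insert (by decide), Finset.sum_singleton]
    have hfx : f x = MonoidAlgebra.single d1
          (x.coeff (FreeSemigroup.of 1 * FreeSemigroup.of 0)
            + x.coeff (FreeSemigroup.of 0 * FreeSemigroup.of 1))
        + MonoidAlgebra.single d2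
          (x.coeff (FreeSemigroup.of 1 * FreeSemigroup.of 1)
            + x.coeff (FreeSemigroup.of 0 * FreeSemigroup.of 0)) := by
      conv_lhs => rw [hxE]
      rw [map_add, map_add, map_add, hfs, hfs, hfs, hfs, h10, h11, ← hd1, ← hd2,
        MonoidAlgebra.single_add, MonoidAlgebra.single_add]
      abel
    have heq0 : MonoidAlgebra.single d1
          (x.coeff (FreeSemigroup.of 1 * FreeSemigroup.of 0)
            + x.coeff (FreeSemigroup.of 0 * FreeSemigroup.of 1))
        + MonoidAlgebra.single d2
          (x.coeff (FreeSemigroup.of 1 * FreeSemigroup.of 1)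
            + x.coeff (FreeSemigroup.of 0 * FreeSemigroup.of 0)) = 0 := hfx.symm.trans hx0
    have heq0' : (Finsupp.single d1
          (x.coeff (FreeSemigroup.of 1 * FreeSemigroup.of 0)
            + x.coeff (FreeSemigroup.of 0 * FreeSemigroup.of 1))
        + Finsupp.single d2
          (x.coeff (FreeSemigroup.of 1 * FreeSemigroup.of 1)
            + x.coeff (FreeSemigroup.of 0 * FreeSemigroup.of 0)) : ↥Dm →₀ ℤ) = 0 := congrArg MonoidAlgebra.coeff heq0
    have hA : x.coeff (FreeSemigroup.of 1 * FreeSemigroup.of 0)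
        + x.coeff (FreeSemigroup.of 0 * FreeSemigroup.of 1) = 0 := by
      have := DFunLike.congr_fun heq0' d1
      simpa [Finsupp.single_apply, Ne.symm hd12] using this
    have hB : x.coeff (FreeSemigroup.of 1 * FreeSemigroup.of 1)
        + x.coeff (FreeSemigroup.of 0 * FreeSemigroup.of 0) = 0 := by
      have := DFunLike.congr_fun heq0' d2
      simpa [Finsupp.single_apply, hd12] using this
    refine ⟨(x.coeff (FreeSemigroup.of 1 * FreeSemigroup.of 0),
             x.coeff (FreeSemigroup.of 1 * FreeSemigroup.of 1)), ?_, ?_⟩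
    · show x = x.coeff (FreeSemigroup.of 1 * FreeSemigroup.of 0) • g1
          + x.coeff (FreeSemigroup.of 1 * FreeSemigroup.of 1) • g2
      have hb : x.coeff (FreeSemigroup.of 0 * FreeSemigroup.of 1)
          = -(x.coeff (FreeSemigroup.of 1 * FreeSemigroup.of 0)) := by omega
      have hd : x.coeff (FreeSemigroup.of 0 * FreeSemigroup.of 0)
          = -(x.coeff (FreeSemigroup.of 1 * FreeSemigroup.of 1)) := by omega
      rw [hg1, hg2]
      conv_lhs => rw [hxE, hb, hd]
      simp only [smul_sub, MonoidAlgebra.smul_single', mul_one, MonoidAlgebra.single_neg]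
      abel
    · rintro ⟨p, q⟩ hpq
      simp only at hpq
      rw [hg1, hg2] at hpq
      have hpq' : @Eq (FreeSemigroup (Fin 2) →₀ ℤ) x.coeff
          (p • (Finsupp.single (FreeSemigroup.of 1 * FreeSemigroup.of 0) (1:ℤ)
                  - Finsupp.single (FreeSemigroup.of 0 * FreeSemigroup.of 1) 1)
          + q • (Finsupp.single (FreeSemigroup.of 1 * FreeSemigroup.of 1) (1:ℤ)
                  - Finsupp.single (FreeSemigroup.of 0 * FreeSemigroup.of 0) 1)) := congrArg MonoidAlgebra.coeff hpq
      have e10 := DFunLike.congr_fun hpq' (FreeSemigroup.of (1 : Fin 2) * FreeSemigroup.of 0)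
      have e11 := DFunLike.congr_fun hpq' (FreeSemigroup.of (1 : Fin 2) * FreeSemigroup.of 1)
      simp only [Finsupp.add_apply, Finsupp.smul_apply, Finsupp.sub_apply,
        Finsupp.single_apply, if_pos rfl,
        if_neg (by decide : ¬ (FreeSemigroup.of (0:Fin 2) * FreeSemigroup.of 1 = FreeSemigroup.of (1:Fin 2) * FreeSemigroup.of 0)),
        if_neg (by decide : ¬ (FreeSemigroup.of (1:Fin 2) * FreeSemigroup.of 1 = FreeSemigroup.of (1:Fin 2) * FreeSemigroup.of 0)),
        if_neg (by decide : ¬ (FreeSemigroup.of (0:Fin 2) * FreeSemigroup.of 0 = FreeSemigroup.of (1:Fin 2) * FreeSemigroup.of 0)),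
        if_neg (by decide : ¬ (FreeSemigroup.of (1:Fin 2) * FreeSemigroup.of 0 = FreeSemigroup.of (1:Fin 2) * FreeSemigroup.of 1)),
        if_neg (by decide : ¬ (FreeSemigroup.of (0:Fin 2) * FreeSemigroup.of 1 = FreeSemigroup.of (1:Fin 2) * FreeSemigroup.of 1)),
        if_neg (by decide : ¬ (FreeSemigroup.of (0:Fin 2) * FreeSemigroup.of 0 = FreeSemigroup.of (1:Fin 2) * FreeSemigroup.of 1))] at e10 e11
      have hp : p = x.coeff (FreeSemigroup.of 1 * FreeSemigroup.of 0) := by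
        rw [e10]; simp
      have hq : q = x.coeff (FreeSemigroup.of 1 * FreeSemigroup.of 1) := by
        rw [e11]; simp
      exact Prod.ext hp hq
end

section
/- Let R_π be a p-torsion-free ring containing ℤ[π], and let φ₁^{(s)}, φ₂^{(s)} be two distinct higher π-Frobenius lifts of degree s on R_π (i.e., ring endomorphisms reducing to the p^s-power Frobenius mod π). Then the ℤ-module endomorphism (1/π)φ₁^{(s)} − (1/π)φ₂^{(s)}: R_π → R_π is well-defined (takes values in R_π) but is not an R_π-linear combination of elements of 𝔉^{(s)} restricted to R_π; in particular not every φ_R^s-semilinear endomorphism of R_π is an R_π-linear combination of higher Frobenius lifts. -/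
/-- Remark 3.3 of the paper.  Let `R_π` be a `p`-torsion-free ring (here a domain
with `π ≠ 0` a non-unit, as for `R_π = R[π]`) containing `ℤ[π]`, and let
`φ₁, φ₂` be two distinct higher `π`-Frobenius lifts of degree `s` on `R_π` (ring
endomorphisms congruent to the `p^s`-power map modulo `π`).  Then the ℤ-module
endomorphism `(1/π)φ₁ − (1/π)φ₂` of `R_π` is well defined (i.e. `φ₁ − φ₂` takes
values in `πR_π`), but it is not an `R_π`-linear combination of higher
`π`-Frobenius lifts of degree `s` on `R_π`; in particular not every Frobenius-
semilinear endomorphism of `R_π` is an `R_π`-linear combination of higher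
Frobenius lifts. -/
theorem stmt12 {Rπ : Type*} [CommRing Rπ] [IsDomain Rπ]
    (p s : ℕ) (hp : p.Prime) (hs : 1 ≤ s)
    (π : Rπ) (hπ0 : π ≠ 0) (hπu : ¬ IsUnit π)
    (hptf : ∀ x : Rπ, (p : Rπ) * x = 0 → x = 0)
    (φ₁ φ₂ : Rπ →+* Rπ)
    (h₁ : ∀ a, φ₁ a - a ^ p ^ s ∈ Ideal.span {π})
    (h₂ : ∀ a, φ₂ a - a ^ p ^ s ∈ Ideal.span {π})
    (hne : φ₁ ≠ φ₂) :
    (∀ a, ∃ b, φ₁ a - φ₂ a = π * b) ∧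
    ¬ ∃ (m : ℕ) (cs : Fin m → Rπ) (ψ : Fin m → (Rπ →+* Rπ)),
        (∀ i, ∀ a, ψ i a - a ^ p ^ s ∈ Ideal.span {π}) ∧
        (∀ a, φ₁ a - φ₂ a = π * ∑ i, cs i * ψ i a) := by
  classical
  constructor
  · intro a
    have h := Ideal.sub_mem _ (h₁ a) (h₂ a)
    rw [sub_sub_sub_cancel_right] at h
    obtain ⟨b, hb⟩ := Ideal.mem_span_singleton.mp h
    exact ⟨b, hb⟩
  · rintro ⟨m, cs, ψ, hψ, hrel⟩
    apply hπu
    -- Dedekind's linear independence of characters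
    have hli := linearIndependent_monoidHom Rπ Rπ
    rw [linearIndependent_iff] at hli
    set l : (Rπ →* Rπ) →₀ Rπ :=
      Finsupp.single (φ₁ : Rπ →* Rπ) 1 - Finsupp.single (φ₂ : Rπ →* Rπ) 1
        - ∑ i, Finsupp.single ((ψ i : Rπ →* Rπ)) (π * cs i) with hl
    have htot : Finsupp.linearCombination Rπ (fun f : Rπ →* Rπ => ⇑f) l = 0 := by
      rw [hl]
      simp only [map_sub, map_sum, Finsupp.linearCombination_single]
      funext a
      have := hrel a
      simp only [Pi.sub_apply, Pi.zero_apply, Pi.smul_apply, Finset.sum_apply,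
        smul_eq_mul, one_mul]
      rw [Finset.mul_sum] at this
      rw [sub_eq_zero]
      exact this.trans (Finset.sum_congr rfl fun i _ => (mul_assoc π (cs i) _).symm)
    have hl0 := hli l htot
    have hval : l (φ₁ : Rπ →* Rπ) = 0 := by rw [hl0]; rfl
    have hne' : (φ₂ : Rπ →* Rπ) ≠ (φ₁ : Rπ →* Rπ) := by
      intro h
      exact hne (RingHom.ext fun a => (DFunLike.congr_fun h a).symm)
    rw [hl] at hval
    simp only [Finsupp.sub_apply, Finsupp.coe_finset_sum, Finset.sum_apply,
      Finsupp.single_apply, if_neg hne', if_pos rfl, sub_zero] at hval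
    rw [sub_eq_zero, if_pos trivial] at hval
    have : (1 : Rπ) = π * ∑ i, if (ψ i : Rπ →* Rπ) = (φ₁ : Rπ →* Rπ) then cs i else 0 := by
      rw [Finset.mul_sum, hval]
      exact Finset.sum_congr rfl fun i _ => by split <;> simp
    exact IsUnit.of_mul_eq_one (a := π) _ this.symm
end

section
/- Let ∇ be a graded π-connection with values in an Atiyah extension \mathfrak{l}, with associated reduced curvature \overline{\mathcal{R}}: \mathfrak{d} × \mathfrak{d} → \mathfrak{a}^{(≥2c)}. If there exist commuting elements X, Y ∈ \mathfrak{D}^{(c)} with [X,Y] = 0 and \overline{\mathcal{R}}(X,Y) ≠ 0, then \overline{\mathcal{R}} is not a Lie 2-coboundary for the graded Lie module \mathfrak{a}^{(≥2c)}; i.e., the reduced Lie characteristic class \overline{κ}_∇ ∈ H²_{Lie}(\mathfrak{d}, \mathfrak{a}^{(≥2c)}) is non-trivial. -/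
/-- Proposition 3.44 ("cincisute") of the paper.  Let `𝔡 = ⊕_{s∈cℕ} 𝔡^{(s)}` be the
graded Lie ℤ-algebra spanned by a Weil monoid of higher Frobenius lifts (modelled
by a Lie ring `L` with graded pieces `dgr`), and let `𝔞 = ⊕_{s∈cℕ} 𝔞^{(s)}` be a
graded Lie `𝔡`-module (modelled by a Lie module `M` with graded pieces `a`), the
action raising degrees (`hact`), the pieces being independent in the relevant
degrees (`hdisj`).  Let `∇` be an `𝔩`-valued graded `π`-connection with reduced
curvature `R̄ : 𝔡 × 𝔡 → 𝔞^{(≥2c)}`.  If there exist `X, Y ∈ 𝔇^{(c)} ⊆ 𝔡^{(c)}`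
with `[X,Y] = 0` and `R̄(X,Y) ≠ 0`, then `R̄` is not a Lie 2-coboundary for the Lie
`𝔡`-module `𝔞^{(≥2c)} = ⊕_{m≥2} 𝔞^{(mc)}`; i.e. the reduced Lie characteristic
class `κ̄_∇ ∈ H²_{Lie}(𝔡, 𝔞^{(≥2c)})` is non-trivial. -/
theorem stmt17 {L M : Type*} [LieRing L] [AddCommGroup M] [LieRingModule L M]
    (c : ℕ) (hc : 1 ≤ c)
    (dgr : ℕ → AddSubgroup L) (a : ℕ → AddSubgroup M)
    (hact : ∀ (r s : ℕ), ∀ Z ∈ dgr r, ∀ v ∈ a s, ⁅Z, v⁆ ∈ a (r + s))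
    (hdisj : ∀ v ∈ a (2 * c),
      v ∈ (⨆ m : {m : ℕ // 3 ≤ m}, a ((m : ℕ) * c)) → v = 0)
    (Rbar : L → L → M)
    (X Y : L) (hX : X ∈ dgr c) (hY : Y ∈ dgr c)
    (hXY : ⁅X, Y⁆ = 0)
    (hR2c : Rbar X Y ∈ a (2 * c)) (hRne : Rbar X Y ≠ 0) :
    ¬ ∃ g : L →+ M,
        (∀ Z : L, g Z ∈ ⨆ m : {m : ℕ // 2 ≤ m}, a ((m : ℕ) * c)) ∧
        (∀ Z W : L, Rbar Z W = ⁅Z, g W⁆ - ⁅W, g Z⁆ - g ⁅Z, W⁆) := by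
  rintro ⟨g, hg, hcob⟩
  set S3 : AddSubgroup M := ⨆ m : {m : ℕ // 3 ≤ m}, a ((m : ℕ) * c) with hS3
  have key : ∀ Z ∈ dgr c, ∀ v ∈ (⨆ m : {m : ℕ // 2 ≤ m}, a ((m : ℕ) * c)),
      ⁅Z, v⁆ ∈ S3 := by
    intro Z hZ v hv
    refine AddSubgroup.iSup_induction (C := fun w => ⁅Z, w⁆ ∈ S3) _ hv (fun m w hw => ?_) ?_ (fun x y hx hy => ?_)
    · have h := hact c ((m : ℕ) * c) Z hZ w hw
      have he : c + (m : ℕ) * c = ((m : ℕ) + 1) * c := by ring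
      rw [he] at h
      exact AddSubgroup.mem_iSup_of_mem ⟨(m : ℕ) + 1, by omega⟩ h
    · simpa using zero_mem S3
    · simpa [lie_add] using add_mem hx hy
  have h1 : ⁅X, g Y⁆ ∈ S3 := key X hX _ (hg Y)
  have h2 : ⁅Y, g X⁆ ∈ S3 := key Y hY _ (hg X)
  have hR : Rbar X Y ∈ S3 := by
    rw [hcob X Y, hXY, map_zero, sub_zero]
    exact sub_mem h1 h2
  exact hRne (hdisj _ hR2c hR)
end

section
/- (Chern curvature for conformally related metrics.) Suppose q^{(2c)} ≡ λ·q^{(c)} mod π² for some λ ∈ R_π, where q^{(c)}, q^{(2c)} are metrics in GL_N(R_π)^{sym}. Then the mod-π components of the curvature of the graded arithmetic Chern connection satisfy \overline{R}^k_{ijl} = (1/2)·λ^{−p^{2c}}(δ_{ij}^{(2c)}λ − δ_{ji}^{(2c)}λ)·δ_{kl} mod π, where δ_{kl} is the Kronecker symbol. In particular if q^{(2c)} ≡ q^{(c)} mod π², or if the degree-c Frobenius lifts commute, the reduced Chern curvature \overline{\mathcal{R}} vanishes on \mathfrak{D}^{(c)} × \mathfrak{D}^{(c)}. -/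
section helpers
variable {R : Type*} [CommRing R]

private lemma auxCancel [IsDomain R] {π x : R} (hπ0 : π ≠ 0)
    (h : π ^ 2 ∣ π * x) : π ∣ x := by
  obtain ⟨t, ht⟩ := h
  exact ⟨t, mul_left_cancel₀ hπ0 (by rw [ht, sq, mul_assoc])⟩

private lemma auxFreshAdd {p : ℕ} (hp : p.Prime) {π : R} (hpπ : π ∣ (p : R))
    (e : ℕ) (x y : R) : π ∣ (x + y) ^ p ^ e - x ^ p ^ e - y ^ p ^ e := by
  rw [add_pow_prime_pow_eq' hp x y e]
  refine hpπ.trans ⟨∑ k ∈ Finset.Ioo 0 (p ^ e), x ^ k * y ^ (p ^ e - k) * ((p ^ e).choose k / p : ℕ), ?_⟩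
  ring

private lemma auxFreshSum {p : ℕ} (hp : p.Prime) {π : R} (hpπ : π ∣ (p : R))
    (e : ℕ) {ι : Type*} (s : Finset ι) (f : ι → R) :
    π ∣ (∑ m ∈ s, f m) ^ p ^ e - ∑ m ∈ s, (f m) ^ p ^ e := by
  classical
  induction s using Finset.induction_on with
  | empty =>
      simp only [Finset.sum_empty, sub_zero]
      exact ⟨0, by rw [zero_pow (pow_pos hp.pos e).ne', mul_zero]⟩
  | @insert a s' ha ih =>
      rw [Finset.sum_insert ha, Finset.sum_insert ha]
      have h1 := auxFreshAdd hp hpπ e (f a) (∑ m ∈ s', f m)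
      have : (f a + ∑ m ∈ s', f m) ^ p ^ e - ((f a) ^ p ^ e + ∑ m ∈ s', (f m) ^ p ^ e)
          = ((f a + ∑ m ∈ s', f m) ^ p ^ e - (f a) ^ p ^ e - (∑ m ∈ s', f m) ^ p ^ e)
            + ((∑ m ∈ s', f m) ^ p ^ e - ∑ m ∈ s', (f m) ^ p ^ e) := by ring
      rw [this]
      exact dvd_add h1 ih

private lemma auxPowSub {π x y : R} (h : π ∣ x - y) (n : ℕ) : π ∣ x ^ n - y ^ n :=
  h.trans (sub_dvd_pow_sub_pow x y n)

private lemma auxOddPowAdd {π x y : R} {n : ℕ} (hn : Odd n) (h : π ∣ x + y) :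
    π ∣ x ^ n + y ^ n := by
  have := auxPowSub (π := π) (x := x) (y := -y) (by simpa [sub_neg_eq_add] using h) n
  rwa [hn.neg_pow, sub_neg_eq_add] at this

private lemma auxFermat2 {p : ℕ} (hp : p.Prime) {π : R} (hpπ : π ∣ (p : R))
    (e : ℕ) : π ∣ (2 : R) ^ p ^ e - 2 := by
  have h := auxFreshAdd hp hpπ e (1 : R) 1
  have h2 : (2 : R) ^ p ^ e - 2 = ((1 : R) + 1) ^ p ^ e - 1 ^ p ^ e - 1 ^ p ^ e := by
    norm_num
    ring
  rw [h2]; exact h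

private lemma auxBinom2 {p : ℕ} (hp : p.Prime) {π : R} (hpπ : π ∣ (p : R))
    {e : ℕ} (he : 1 ≤ e) (a b : R) (hb : π ∣ b) :
    π ^ 2 ∣ (a + b) ^ p ^ e - a ^ p ^ e := by
  rw [add_pow_prime_pow_eq' hp a b e]
  have h1 : π ^ 2 ∣ b ^ p ^ e := by
    have h2 : 2 ≤ p ^ e := le_trans hp.two_le (Nat.le_self_pow (by omega) p)
    calc π ^ 2 ∣ b ^ 2 := pow_dvd_pow_of_dvd hb 2
    _ ∣ b ^ p ^ e := pow_dvd_pow b h2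
  have h2 : π ^ 2 ∣ (p : R) * ∑ k ∈ Finset.Ioo 0 (p ^ e),
      a ^ k * b ^ (p ^ e - k) * ((p ^ e).choose k / p : ℕ) := by
    rw [sq]
    refine mul_dvd_mul hpπ (Finset.dvd_sum fun k hk => ?_)
    rw [Finset.mem_Ioo] at hk
    have : π ∣ b ^ (p ^ e - k) := dvd_pow hb (by omega)
    exact (this.mul_left _).mul_right _
  calc π ^ 2 ∣ b ^ p ^ e + (p:R) * _ := dvd_add h1 h2
  _ = _ := by ring

end helpers

/-- Theorem 3.39 ("wqq") of the paper: curvature of the arithmetic Chern connection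
for conformally related metrics.  Setup: `R_π` a domain with `p ∈ (π)` and `2` a
unit; `φ i` are higher `π`-Frobenius lifts of degree `c` with attached higher
`π`-derivations `δ i`, and `δ2 i j` the degree-`2c` derivation attached to `φᵢφⱼ`;
`q = q^{(c)}` and `q2 = q^{(2c)}` are symmetric invertible metrics with
`q^{(2c)} ≡ λ·q^{(c)}` mod `π²`.  The hypotheses `hΓc`, `hΓ2` express the Chern
Christoffel symbols mod `π` (Theorem 3.38 / Corollary 3.41 of Part 1), and `hR`
the reduced curvature components `R̄^k_{ijl}` of the graded Chern connection
(formula (3.49)).  Conclusion (stated after multiplying by the unit `2λ^{p^{2c}}`):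
`R̄^k_{ijl} = (1/2)·λ^{−p^{2c}}(δ²_{ij}λ − δ²_{ji}λ)·δ_{kl}` mod `π`; in particular
if the degree-`c` Frobenius lifts commute, or if `q^{(2c)} ≡ q^{(c)}` mod `π²`,
the Chern curvature vanishes mod `π` on `𝔇^{(c)} × 𝔇^{(c)}`. -/
theorem stmt18 {Rπ : Type*} [CommRing Rπ] [IsDomain Rπ]
    (p c n N : ℕ) (hp : p.Prime) (hodd : Odd p) (hc : 1 ≤ c)
    (π : Rπ) (hπ0 : π ≠ 0) (hpπ : (p : Rπ) ∈ Ideal.span {π})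
    (h2 : IsUnit (2 : Rπ))
    (φ : Fin n → Rπ →+* Rπ)
    (δ : Fin n → Rπ → Rπ) (hδ : ∀ i a, π * δ i a = φ i a - a ^ p ^ c)
    (δ2 : Fin n → Fin n → Rπ → Rπ)
    (hδ2 : ∀ i j a, π * δ2 i j a = φ i (φ j a) - a ^ p ^ (2 * c))
    (lam : Rπ) (hlam : IsUnit lam)
    (q q2 : Matrix (Fin N) (Fin N) Rπ) (hqs : q.IsSymm) (hq2s : q2.IsSymm)
    (qi q2i : Matrix (Fin N) (Fin N) Rπ) (hqi : q * qi = 1) (hq2i : q2 * q2i = 1)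
    (hconf : ∀ k l, q2 k l - lam * q k l ∈ Ideal.span {π ^ 2})
    (Γc : Fin n → Fin N → Fin N → Rπ)
    (hΓc : ∀ j k l, 2 * Γc j k l + ∑ m, δ j (q k m) * (qi m l) ^ p ^ c
      ∈ Ideal.span {π})
    (Γ2 : Fin n → Fin n → Fin N → Fin N → Rπ)
    (hΓ2 : ∀ i j k l,
      2 * Γ2 i j k l + ∑ m, δ2 i j (q2 k m) * (q2i m l) ^ p ^ (2 * c)
        ∈ Ideal.span {π})
    (R : Fin n → Fin n → Fin N → Fin N → Rπ)
    (hR : ∀ i j k l,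
      R i j k l -
        (δ i π * (Γc j l k) ^ p ^ c - δ j π * (Γc i l k) ^ p ^ c
          - Γ2 i j l k + Γ2 j i l k) ∈ Ideal.span {π}) :
    (∀ i j k l,
      2 * lam ^ p ^ (2 * c) * R i j k l
        - (δ2 i j lam - δ2 j i lam) * (if k = l then 1 else 0)
        ∈ Ideal.span {π}) ∧
    ((∀ i j a, φ i (φ j a) = φ j (φ i a)) →
      ∀ i j k l, R i j k l ∈ Ideal.span {π}) ∧
    ((∀ k l, q2 k l - q k l ∈ Ideal.span {π ^ 2}) →
      ∀ i j k l, R i j k l ∈ Ideal.span {π}) := by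
  classical
  simp only [Ideal.mem_span_singleton] at hpπ hconf hΓc hΓ2 hR ⊢
  have hP0 : p ^ (2 * c) ≠ 0 := (pow_pos hp.pos _).ne'
  have hQ0 : p ^ c ≠ 0 := (pow_pos hp.pos _).ne'
  have hQ2 : 2 ≤ p ^ c := le_trans hp.two_le (Nat.le_self_pow (by omega) p)
  have hQodd : Odd (p ^ c) := hodd.pow
  have hPQQ : ∀ x : Rπ, x ^ p ^ (2 * c) = (x ^ p ^ c) ^ p ^ c := by
    intro x; rw [two_mul, pow_add, pow_mul]
  have hφ : ∀ i a, φ i a = a ^ p ^ c + π * δ i a := fun i a => by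
    linear_combination - hδ i a
  have hφφ : ∀ i j a, φ i (φ j a) = a ^ p ^ (2 * c) + π * δ2 i j a := fun i j a => by
    linear_combination - hδ2 i j a
  -- product rule for δ2 mod π
  have hprod : ∀ i j a b, π ∣ δ2 i j (a * b)
      - (a ^ p ^ (2 * c) * δ2 i j b + b ^ p ^ (2 * c) * δ2 i j a) := by
    intro i j a b
    refine auxCancel hπ0 ⟨δ2 i j a * δ2 i j b, ?_⟩
    have hab := hδ2 i j (a * b)
    rw [map_mul, map_mul] at hab
    linear_combination hab - φ i (φ j b) * hδ2 i j a
      - (a ^ p ^ (2 * c) + π * δ2 i j a) * hδ2 i j b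
  -- mod π² invariance of δ2
  have hφφπ : ∀ i j, π ∣ φ i (φ j π) := fun i j => by
    rw [hφφ]
    exact dvd_add (dvd_pow_self π hP0) ⟨δ2 i j π, rfl⟩
  have hinv : ∀ i j a b, π ^ 2 ∣ a - b → π ∣ δ2 i j a - δ2 i j b := by
    intro i j a b hab
    refine auxCancel hπ0 ?_
    have e1 : π * (δ2 i j a - δ2 i j b)
        = (φ i (φ j a) - φ i (φ j b)) - (a ^ p ^ (2 * c) - b ^ p ^ (2 * c)) := by
      linear_combination hδ2 i j a - hδ2 i j b
    rw [e1]
    refine dvd_sub ?_ (hab.trans (sub_dvd_pow_sub_pow a b _))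
    obtain ⟨t, ht⟩ := hab
    have e2 : φ i (φ j a) - φ i (φ j b) = φ i (φ j π) ^ 2 * φ i (φ j t) := by
      rw [← map_sub, ← map_sub, ht, ← map_pow, ← map_mul, ← map_pow, ← map_mul]
    rw [e2]
    exact (pow_dvd_pow_of_dvd (hφφπ i j) 2).mul_right _
  -- key identity δ i π * (δ j u)^{p^c} ≡ δ2 i j u
  have hkey : ∀ i j u, π ∣ δ2 i j u - δ i π * (δ j u) ^ p ^ c := by
    intro i j u
    refine auxCancel hπ0 ?_
    have h1 := hδ2 i j u
    rw [hφ j u, map_add, map_pow, map_mul, hφ i u, hφ i π, hφ i (δ j u)] at h1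
    have e1 : π * (δ2 i j u - δ i π * (δ j u) ^ p ^ c)
        = ((u ^ p ^ c + π * δ i u) ^ p ^ c - u ^ p ^ (2 * c))
          + π ^ p ^ c * ((δ j u) ^ p ^ c + π * δ i (δ j u))
          + π ^ 2 * (δ i π * δ i (δ j u)) := by
      linear_combination h1
    rw [e1]
    refine dvd_add (dvd_add ?_ ?_) ⟨_, rfl⟩
    · have hb := auxBinom2 hp hpπ hc (u ^ p ^ c) (π * δ i u) ⟨δ i u, rfl⟩
      rwa [← hPQQ u] at hb
    · exact (pow_dvd_pow π hQ2).mul_right _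
  -- matrix facts
  have hqiq : qi * q = 1 := mul_eq_one_comm.mp hqi
  have hkron : ∀ (l k : Fin N), ∑ m, q l m * qi m k = if k = l then 1 else 0 := by
    intro l k
    have h1 : ∑ m, q l m * qi m k = (1 : Matrix (Fin N) (Fin N) Rπ) l k := by
      rw [← Matrix.mul_apply, hqi]
    rw [h1, Matrix.one_apply]
    by_cases h : l = k <;> simp [h, eq_comm]
  have hq2iconf : ∀ m k', π ∣ lam * q2i m k' - qi m k' := by
    intro m k'
    have hM : lam • q2i - qi = qi * (lam • q - q2) * q2i := by
      rw [Matrix.mul_sub, Matrix.sub_mul, mul_smul_comm, smul_mul_assoc, hqiq, one_mul,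
        Matrix.mul_assoc, hq2i, Matrix.mul_one]
    have h3 : π ∣ (qi * (lam • q - q2) * q2i) m k' := by
      rw [Matrix.mul_apply]
      refine Finset.dvd_sum fun b _ => ?_
      rw [Matrix.mul_apply, Finset.sum_mul]
      refine Finset.dvd_sum fun a _ => ?_
      have hD : π ∣ (lam • q - q2) a b := by
        refine (dvd_pow_self π two_ne_zero).trans ?_
        have h' : (lam • q - q2) a b = -(q2 a b - lam * q a b) := by
          simp [Matrix.sub_apply, Matrix.smul_apply, smul_eq_mul]
        rw [h']
        exact dvd_neg.mpr (hconf a b)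
      exact ((hD.mul_left _).mul_right _)
    have h4 : lam * q2i m k' - qi m k' = (qi * (lam • q - q2) * q2i) m k' := by
      rw [← hM]
      simp [Matrix.sub_apply, Matrix.smul_apply, smul_eq_mul]
    rw [h4]; exact h3
  -- Step A
  have hstepA : ∀ (i j : Fin n) (k l : Fin N),
      π ∣ 2 * (δ i π * Γc j l k ^ p ^ c)
        + ∑ m, δ2 i j (q l m) * qi m k ^ p ^ (2 * c) := by
    intro i j k l
    have h1 : π ∣ 2 * Γc j l k + ∑ m, δ j (q l m) * qi m k ^ p ^ c := hΓc j l k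
    have h23 : π ∣ 2 * Γc j l k ^ p ^ c + (∑ m, δ j (q l m) * qi m k ^ p ^ c) ^ p ^ c := by
      have h2' := auxOddPowAdd hQodd h1
      have hf := auxFermat2 hp hpπ c
      have e : 2 * Γc j l k ^ p ^ c + (∑ m, δ j (q l m) * qi m k ^ p ^ c) ^ p ^ c
          = ((2 * Γc j l k) ^ p ^ c + (∑ m, δ j (q l m) * qi m k ^ p ^ c) ^ p ^ c)
            - ((2 : Rπ) ^ p ^ c - 2) * Γc j l k ^ p ^ c := by
        rw [mul_pow]; ring
      rw [e]
      exact dvd_sub h2' (hf.mul_right _)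
    have h4 : π ∣ (∑ m, δ j (q l m) * qi m k ^ p ^ c) ^ p ^ c
        - ∑ m, (δ j (q l m)) ^ p ^ c * qi m k ^ p ^ (2 * c) := by
      have hf := auxFreshSum hp hpπ c Finset.univ (fun m => δ j (q l m) * qi m k ^ p ^ c)
      have he : ∑ m, (δ j (q l m) * qi m k ^ p ^ c) ^ p ^ c
          = ∑ m, (δ j (q l m)) ^ p ^ c * qi m k ^ p ^ (2 * c) :=
        Finset.sum_congr rfl fun m _ => by rw [mul_pow, ← hPQQ]
      rwa [he] at hf
    have h5 : π ∣ δ i π * (∑ m, (δ j (q l m)) ^ p ^ c * qi m k ^ p ^ (2 * c))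
        - ∑ m, δ2 i j (q l m) * qi m k ^ p ^ (2 * c) := by
      rw [Finset.mul_sum, ← Finset.sum_sub_distrib]
      refine Finset.dvd_sum fun m _ => ?_
      have hk := hkey i j (q l m)
      have e : δ i π * ((δ j (q l m)) ^ p ^ c * qi m k ^ p ^ (2 * c))
            - δ2 i j (q l m) * qi m k ^ p ^ (2 * c)
          = -((δ2 i j (q l m) - δ i π * (δ j (q l m)) ^ p ^ c) * qi m k ^ p ^ (2 * c)) := by
        ring
      rw [e]
      exact dvd_neg.mpr (hk.mul_right _)
    have e : 2 * (δ i π * Γc j l k ^ p ^ c)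
          + ∑ m, δ2 i j (q l m) * qi m k ^ p ^ (2 * c)
        = δ i π * (2 * Γc j l k ^ p ^ c + (∑ m, δ j (q l m) * qi m k ^ p ^ c) ^ p ^ c)
          - δ i π * ((∑ m, δ j (q l m) * qi m k ^ p ^ c) ^ p ^ c
            - ∑ m, (δ j (q l m)) ^ p ^ c * qi m k ^ p ^ (2 * c))
          - (δ i π * (∑ m, (δ j (q l m)) ^ p ^ c * qi m k ^ p ^ (2 * c))
            - ∑ m, δ2 i j (q l m) * qi m k ^ p ^ (2 * c)) := by ring
    rw [e]
    exact dvd_sub (dvd_sub (h23.mul_left _) (h4.mul_left _)) h5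
  -- Step B
  have hstepB : ∀ (i j : Fin n) (k l : Fin N),
      π ∣ 2 * lam ^ p ^ (2 * c) * Γ2 i j l k
        + (lam ^ p ^ (2 * c) * ∑ m, δ2 i j (q l m) * qi m k ^ p ^ (2 * c)
          + δ2 i j lam * (if k = l then 1 else 0)) := by
    intro i j k l
    have hC : π ∣ 2 * Γ2 i j l k + ∑ m, δ2 i j (q2 l m) * q2i m k ^ p ^ (2 * c) := hΓ2 i j l k
    have htm : ∀ m : Fin N, π ∣ lam ^ p ^ (2 * c) * (δ2 i j (q2 l m) * q2i m k ^ p ^ (2 * c))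
        - (lam ^ p ^ (2 * c) * (δ2 i j (q l m) * qi m k ^ p ^ (2 * c))
          + δ2 i j lam * (q l m * qi m k) ^ p ^ (2 * c)) := by
      intro m
      have h6 : π ∣ δ2 i j (q2 l m)
          - (lam ^ p ^ (2 * c) * δ2 i j (q l m) + (q l m) ^ p ^ (2 * c) * δ2 i j lam) := by
        have ha := hinv i j (q2 l m) (lam * q l m) (hconf l m)
        have hb := hprod i j lam (q l m)
        have e : δ2 i j (q2 l m)
              - (lam ^ p ^ (2 * c) * δ2 i j (q l m) + (q l m) ^ p ^ (2 * c) * δ2 i j lam)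
            = (δ2 i j (q2 l m) - δ2 i j (lam * q l m))
              + (δ2 i j (lam * q l m)
                - (lam ^ p ^ (2 * c) * δ2 i j (q l m) + (q l m) ^ p ^ (2 * c) * δ2 i j lam)) := by
          ring
        rw [e]
        exact dvd_add ha hb
      have h7 : π ∣ (lam * q2i m k) ^ p ^ (2 * c) - (qi m k) ^ p ^ (2 * c) :=
        auxPowSub (hq2iconf m k) _
      have e : lam ^ p ^ (2 * c) * (δ2 i j (q2 l m) * q2i m k ^ p ^ (2 * c))
            - (lam ^ p ^ (2 * c) * (δ2 i j (q l m) * qi m k ^ p ^ (2 * c))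
              + δ2 i j lam * (q l m * qi m k) ^ p ^ (2 * c))
          = δ2 i j (q2 l m) * ((lam * q2i m k) ^ p ^ (2 * c) - (qi m k) ^ p ^ (2 * c))
            + (δ2 i j (q2 l m)
              - (lam ^ p ^ (2 * c) * δ2 i j (q l m) + (q l m) ^ p ^ (2 * c) * δ2 i j lam))
              * (qi m k) ^ p ^ (2 * c) := by
        rw [mul_pow, mul_pow]; ring
      rw [e]
      exact dvd_add (h7.mul_left _) (h6.mul_right _)
    have h8 : π ∣ lam ^ p ^ (2 * c) * (∑ m, δ2 i j (q2 l m) * q2i m k ^ p ^ (2 * c))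
        - (lam ^ p ^ (2 * c) * (∑ m, δ2 i j (q l m) * qi m k ^ p ^ (2 * c))
          + δ2 i j lam * ∑ m, (q l m * qi m k) ^ p ^ (2 * c)) := by
      have hs := Finset.dvd_sum (fun m (_ : m ∈ Finset.univ) => htm m)
      have e : ∑ m, (lam ^ p ^ (2 * c) * (δ2 i j (q2 l m) * q2i m k ^ p ^ (2 * c))
            - (lam ^ p ^ (2 * c) * (δ2 i j (q l m) * qi m k ^ p ^ (2 * c))
              + δ2 i j lam * (q l m * qi m k) ^ p ^ (2 * c)))
          = lam ^ p ^ (2 * c) * (∑ m, δ2 i j (q2 l m) * q2i m k ^ p ^ (2 * c))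
            - (lam ^ p ^ (2 * c) * (∑ m, δ2 i j (q l m) * qi m k ^ p ^ (2 * c))
              + δ2 i j lam * ∑ m, (q l m * qi m k) ^ p ^ (2 * c)) := by
        rw [Finset.sum_sub_distrib, Finset.sum_add_distrib, ← Finset.mul_sum, ← Finset.mul_sum,
          ← Finset.mul_sum]
      rwa [e] at hs
    have h9 : π ∣ ∑ m, (q l m * qi m k) ^ p ^ (2 * c) - (if k = l then 1 else 0) := by
      have hf := auxFreshSum hp hpπ (2 * c) Finset.univ (fun m => q l m * qi m k)
      rw [hkron l k] at hf
      have hpow : ((if k = l then (1 : Rπ) else 0)) ^ p ^ (2 * c)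
          = (if k = l then (1 : Rπ) else 0) := by
        split <;> simp [zero_pow hP0]
      rw [hpow] at hf
      have := dvd_neg.mpr hf
      rwa [neg_sub] at this
    have e : 2 * lam ^ p ^ (2 * c) * Γ2 i j l k
          + (lam ^ p ^ (2 * c) * ∑ m, δ2 i j (q l m) * qi m k ^ p ^ (2 * c)
            + δ2 i j lam * (if k = l then 1 else 0))
        = lam ^ p ^ (2 * c)
            * (2 * Γ2 i j l k + ∑ m, δ2 i j (q2 l m) * q2i m k ^ p ^ (2 * c))
          - (lam ^ p ^ (2 * c) * (∑ m, δ2 i j (q2 l m) * q2i m k ^ p ^ (2 * c))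
            - (lam ^ p ^ (2 * c) * (∑ m, δ2 i j (q l m) * qi m k ^ p ^ (2 * c))
              + δ2 i j lam * ∑ m, (q l m * qi m k) ^ p ^ (2 * c)))
          - δ2 i j lam * (∑ m, (q l m * qi m k) ^ p ^ (2 * c) - (if k = l then 1 else 0)) := by
      ring
    rw [e]
    exact dvd_sub (dvd_sub (hC.mul_left _) h8) (h9.mul_left _)
  -- key combination
  have hkey2 : ∀ (i j : Fin n) (k l : Fin N),
      π ∣ 2 * lam ^ p ^ (2 * c) * (δ i π * Γc j l k ^ p ^ c - Γ2 i j l k)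
        - δ2 i j lam * (if k = l then 1 else 0) := by
    intro i j k l
    have hA := hstepA i j k l
    have hB := hstepB i j k l
    have e : 2 * lam ^ p ^ (2 * c) * (δ i π * Γc j l k ^ p ^ c - Γ2 i j l k)
          - δ2 i j lam * (if k = l then 1 else 0)
        = lam ^ p ^ (2 * c) * (2 * (δ i π * Γc j l k ^ p ^ c)
            + ∑ m, δ2 i j (q l m) * qi m k ^ p ^ (2 * c))
          - (2 * lam ^ p ^ (2 * c) * Γ2 i j l k
            + (lam ^ p ^ (2 * c) * ∑ m, δ2 i j (q l m) * qi m k ^ p ^ (2 * c)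
              + δ2 i j lam * (if k = l then 1 else 0))) := by ring
    rw [e]
    exact dvd_sub (hA.mul_left _) hB
  -- main congruence
  have main : ∀ (i j : Fin n) (k l : Fin N),
      π ∣ 2 * lam ^ p ^ (2 * c) * R i j k l
        - (δ2 i j lam - δ2 j i lam) * (if k = l then 1 else 0) := by
    intro i j k l
    have hr := hR i j k l
    have e : 2 * lam ^ p ^ (2 * c) * R i j k l
          - (δ2 i j lam - δ2 j i lam) * (if k = l then 1 else 0)
        = 2 * lam ^ p ^ (2 * c)
            * (R i j k l - (δ i π * Γc j l k ^ p ^ c - δ j π * Γc i l k ^ p ^ c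
              - Γ2 i j l k + Γ2 j i l k))
          + (2 * lam ^ p ^ (2 * c) * (δ i π * Γc j l k ^ p ^ c - Γ2 i j l k)
            - δ2 i j lam * (if k = l then 1 else 0))
          - (2 * lam ^ p ^ (2 * c) * (δ j π * Γc i l k ^ p ^ c - Γ2 j i l k)
            - δ2 j i lam * (if k = l then 1 else 0)) := by ring
    rw [e]
    exact dvd_sub (dvd_add (hr.mul_left _) (hkey2 i j k l)) (hkey2 j i k l)
  -- unit cancellation
  have hcancelu : ∀ x : Rπ, π ∣ 2 * lam ^ p ^ (2 * c) * x → π ∣ x := by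
    intro x hx
    obtain ⟨v, hv⟩ := h2.mul (hlam.pow (p ^ (2 * c)))
    rw [← hv] at hx
    have e : x = ↑v⁻¹ * (↑v * x) := by rw [← mul_assoc, Units.inv_mul, one_mul]
    rw [e]
    exact (hx.mul_left _)
  refine ⟨main, ?_, ?_⟩
  · intro hcomm i j k l
    have hδ2symm : δ2 i j lam = δ2 j i lam :=
      mul_left_cancel₀ hπ0 (by rw [hδ2 i j lam, hδ2 j i lam, hcomm i j lam])
    have h := main i j k l
    rw [hδ2symm, sub_self, zero_mul, sub_zero] at h
    exact hcancelu _ h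
  · intro hq2q i j k l
    have hlam1 : π ^ 2 ∣ lam - 1 := by
      have he : ∑ m, ((lam * q k m - q2 k m) + (q2 k m - q k m)) * qi m k = lam - 1 := by
        have e1 : ∀ m : Fin N, ((lam * q k m - q2 k m) + (q2 k m - q k m)) * qi m k
            = (lam - 1) * (q k m * qi m k) := fun m => by ring
        rw [Finset.sum_congr rfl (fun m _ => e1 m), ← Finset.mul_sum, hkron k k,
          if_pos rfl, mul_one]
      rw [← he]
      refine Finset.dvd_sum fun m _ => ?_
      have h1 : π ^ 2 ∣ lam * q k m - q2 k m := by
        have := dvd_neg.mpr (hconf k m)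
        rwa [neg_sub] at this
      exact ((dvd_add h1 (hq2q k m)).mul_right _)
    have hδ2lam : ∀ i' j' : Fin n, π ∣ δ2 i' j' lam := by
      intro i' j'
      have h0 : δ2 i' j' 1 = 0 :=
        mul_left_cancel₀ hπ0 (by rw [hδ2 i' j' 1, map_one, map_one, one_pow]; ring)
      have := hinv i' j' lam 1 hlam1
      rwa [h0, sub_zero] at this
    have h := main i j k l
    have hz : π ∣ (δ2 i j lam - δ2 j i lam) * (if k = l then 1 else 0) :=
      (dvd_sub (hδ2lam i j) (hδ2lam j i)).mul_right _
    have h' : π ∣ 2 * lam ^ p ^ (2 * c) * R i j k l := by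
      have e : 2 * lam ^ p ^ (2 * c) * R i j k l
          = (2 * lam ^ p ^ (2 * c) * R i j k l
              - (δ2 i j lam - δ2 j i lam) * (if k = l then 1 else 0))
            + (δ2 i j lam - δ2 j i lam) * (if k = l then 1 else 0) := by ring
      rw [e]
      exact dvd_add h hz
    exact hcancelu _ h'
end
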